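/- arXiv:1703.00412 — 10 statements merged into one kernel-verified Lean document; each statement's English description precedes it below -/
import Mathlib

section
/- Suppose the Hessian map H is Lipschitz continuous in operator norm with constant σ > 0. Let x ∈ E with λ(x) < 0, let γ ∈ (0,1] and θ > 0, and let d ∈ E satisfy ⟪d, H(x) d⟫ ≤ γ λ(x) ‖d‖², ⟪g(x), d⟫ ≤ 0, and ‖d‖ = θ|λ(x)|. Then for every β ∈ (0, 3γ/(σθ)) one has f(x + β d) ≤ f(x) − c₁(β) |λ(x)|³, where c₁(β) := (1/2) β² θ² (γ − (1/3) σ β θ), and moreover c₁(β) > 0. -/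
open scoped RealInnerProductSpace
open Set

/-!
Along the line `φ t = f (x + t • p)` one has `φ'' t = ⟪H (x + t • p) p, p⟫`, and the Lipschitz
bound on `H` gives `φ'' t ≤ φ'' 0 + σ ‖p‖³ t`; comparing twice with polynomials yields the cubic
model `f (x + p) ≤ f x + ⟪∇f x, p⟫ + ½ ⟪H x p, p⟫ + σ/6 ‖p‖³`. For `p = β • d` the linear term is
nonpositive, the quadratic one is at most `-½ β² γ θ² |λ|³` and the cubic one equals
`σ/6 β³ θ³ |λ|³`; their sum is `-c₁(β) |λ|³`, and `β < 3γ/(σθ)` is exactly `c₁(β) > 0`.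
-/

theorem image_one_le_of_second_deriv_le_linear {φ φ' φ'' : ℝ → ℝ} {M : ℝ}
    (hφ : ∀ t, HasDerivAt φ (φ' t) t) (hφ' : ∀ t, HasDerivAt φ' (φ'' t) t)
    (hM : ∀ t ∈ Ico (0 : ℝ) 1, φ'' t ≤ φ'' 0 + M * t) :
    φ 1 ≤ φ 0 + φ' 0 + φ'' 0 / 2 + M / 6 := by
  have hB₁ : ∀ t, HasDerivAt (fun t => φ' 0 + φ'' 0 * t + M * t ^ 2 / 2) (φ'' 0 + M * t) t := by
    intro t
    refine ((((hasDerivAt_id t).const_mul (φ'' 0)).const_add (φ' 0)).add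
      (((hasDerivAt_pow 2 t).const_mul M).div_const 2)).congr_deriv ?_
    simp only [mul_one, Nat.cast_ofNat, Nat.add_one_sub_one, pow_one]; ring
  have hB₂ : ∀ t, HasDerivAt (fun t => φ 0 + φ' 0 * t + φ'' 0 * t ^ 2 / 2 + M * t ^ 3 / 6)
      (φ' 0 + φ'' 0 * t + M * t ^ 2 / 2) t := by
    intro t
    refine (((((hasDerivAt_id t).const_mul (φ' 0)).const_add (φ 0)).add
      (((hasDerivAt_pow 2 t).const_mul (φ'' 0)).div_const 2)).add
      (((hasDerivAt_pow 3 t).const_mul M).div_const 6)).congr_deriv ?_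
    simp only [mul_one, Nat.cast_ofNat, Nat.add_one_sub_one, pow_one]; ring
  have hφ'_le : ∀ t ∈ Icc (0 : ℝ) 1, φ' t ≤ φ' 0 + φ'' 0 * t + M * t ^ 2 / 2 :=
    image_le_of_deriv_right_le_deriv_boundary
      (fun t _ => (hφ' t).continuousAt.continuousWithinAt) (fun t _ => (hφ' t).hasDerivWithinAt)
      (by simp) (fun t _ => (hB₁ t).continuousAt.continuousWithinAt)
      (fun t _ => (hB₁ t).hasDerivWithinAt) hM
  have hφ_le := image_le_of_deriv_right_le_deriv_boundary
      (fun t _ => (hφ t).continuousAt.continuousWithinAt) (fun t _ => (hφ t).hasDerivWithinAt)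
      (by simp) (fun t _ => (hB₂ t).continuousAt.continuousWithinAt)
      (fun t _ => (hB₂ t).hasDerivWithinAt) (fun t ht => hφ'_le t (Ico_subset_Icc_self ht))
      (right_mem_Icc.2 zero_le_one)
  simpa using hφ_le

variable {E : Type*} [NormedAddCommGroup E] [InnerProductSpace ℝ E]

theorem inner_apply_add_smul_le_of_lipschitz {H : E → E →L[ℝ] E} {σ : ℝ}
    (hHLip : ∀ x y, ‖H x - H y‖ ≤ σ * ‖x - y‖) (x p : E) {t : ℝ} (ht : 0 ≤ t) :
    ⟪H (x + t • p) p, p⟫ ≤ ⟪H x p, p⟫ + σ * ‖p‖ ^ 3 * t := by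
  have hdiff : ⟪(H (x + t • p) - H x) p, p⟫ ≤ σ * ‖p‖ ^ 3 * t :=
    calc ⟪(H (x + t • p) - H x) p, p⟫ ≤ ‖H (x + t • p) - H x‖ * ‖p‖ * ‖p‖ :=
          (real_inner_le_norm _ _).trans (by gcongr; exact (H (x + t • p) - H x).le_opNorm p)
    _ ≤ σ * ‖x + t • p - x‖ * ‖p‖ * ‖p‖ := by gcongr; exact hHLip _ _
    _ = σ * ‖p‖ ^ 3 * t := by
          rw [add_sub_cancel_left, norm_smul, Real.norm_of_nonneg ht]; ring
  rw [sub_apply, inner_sub_left] at hdiff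
  linarith

theorem hasDerivAt_add_smul (x p : E) (t : ℝ) : HasDerivAt (fun s : ℝ => x + s • p) p t := by
  simpa using ((hasDerivAt_id t).smul_const p).const_add x

variable [CompleteSpace E]

theorem hasDerivAt_apply_add_smul {f : E → ℝ} (hf : Differentiable ℝ f) (x p : E) (t : ℝ) :
    HasDerivAt (fun s : ℝ => f (x + s • p)) ⟪gradient f (x + t • p), p⟫ t := by
  refine ((hf _).hasGradientAt.hasFDerivAt.comp_hasDerivAt t (hasDerivAt_add_smul x p t)).congr_deriv ?_
  simp [gradient]

theorem hasDerivAt_inner_gradient_add_smul {f : E → ℝ} {H : E → E →L[ℝ] E}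
    (hH : ∀ x, HasFDerivAt (gradient f) (H x) x) (x p : E) (t : ℝ) :
    HasDerivAt (fun s : ℝ => ⟪gradient f (x + s • p), p⟫) ⟪H (x + t • p) p, p⟫ t := by
  simpa using ((hH _).comp_hasDerivAt t (hasDerivAt_add_smul x p t)).inner ℝ (hasDerivAt_const t p)

theorem apply_add_le_of_hessian_lipschitz {f : E → ℝ} (hf : Differentiable ℝ f)
    {H : E → E →L[ℝ] E} (hH : ∀ x, HasFDerivAt (gradient f) (H x) x) {σ : ℝ}
    (hHLip : ∀ x y, ‖H x - H y‖ ≤ σ * ‖x - y‖) (x p : E) :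
    f (x + p) ≤ f x + ⟪gradient f x, p⟫ + 1 / 2 * ⟪H x p, p⟫ + σ / 6 * ‖p‖ ^ 3 := by
  have := image_one_le_of_second_deriv_le_linear (hasDerivAt_apply_add_smul hf x p)
    (hasDerivAt_inner_gradient_add_smul hH x p)
    (fun t ht => by simpa using inner_apply_add_smul_le_of_lipschitz hHLip x p ht.1)
  simp only [one_smul, zero_smul, add_zero] at this
  linarith

theorem two_step_negative_curvature_decrease_general
    (n : ℕ)
    (f : EuclideanSpace ℝ (Fin n) → ℝ) (hf : ContDiff ℝ 2 f)
    (H : EuclideanSpace ℝ (Fin n) → EuclideanSpace ℝ (Fin n) →L[ℝ] EuclideanSpace ℝ (Fin n))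
    (hH : ∀ x, HasFDerivAt (gradient f) (H x) x)
    (lam : EuclideanSpace ℝ (Fin n) → ℝ)
    (σ : ℝ) (hσ : 0 < σ)
    (hHLip : ∀ x y, ‖H x - H y‖ ≤ σ * ‖x - y‖)
    (x : EuclideanSpace ℝ (Fin n)) (hx : lam x < 0)
    (γ θ : ℝ) (hθ : 0 < θ)
    (d : EuclideanSpace ℝ (Fin n))
    (hd1 : ⟪d, H x d⟫ ≤ γ * lam x * ‖d‖ ^ 2)
    (hd2 : ⟪gradient f x, d⟫ ≤ 0)
    (hd3 : ‖d‖ = θ * |lam x|) :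
    ∀ β ∈ Set.Ioo (0 : ℝ) (3 * γ / (σ * θ)),
      f (x + β • d) ≤ f x - (1/2 * β ^ 2 * θ ^ 2 * (γ - 1/3 * σ * β * θ)) * |lam x| ^ 3 ∧
      0 < 1/2 * β ^ 2 * θ ^ 2 * (γ - 1/3 * σ * β * θ) := by
  rintro β ⟨hβ, hβγ⟩
  have hgap : 0 < γ - 1/3 * σ * β * θ := by
    rw [lt_div_iff₀ (by positivity)] at hβγ
    linarith
  refine ⟨?_, by positivity⟩
  have hslope : β * ⟪gradient f x, d⟫ ≤ 0 := mul_nonpos_of_nonneg_of_nonpos hβ.le hd2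
  have hcurv : β ^ 2 * ⟪H x d, d⟫ ≤ β ^ 2 * -(γ * θ ^ 2 * |lam x| ^ 3) := by
    refine mul_le_mul_of_nonneg_left ?_ (sq_nonneg β)
    calc ⟪H x d, d⟫ = ⟪d, H x d⟫ := real_inner_comm _ _
    _ ≤ γ * lam x * ‖d‖ ^ 2 := hd1
    _ = -(γ * θ ^ 2 * |lam x| ^ 3) := by rw [hd3, abs_of_neg hx]; ring
  have htaylor := apply_add_le_of_hessian_lipschitz (hf.differentiable two_ne_zero) hH hHLip x
    (β • d)
  simp only [map_smul, real_inner_smul_left, real_inner_smul_right, norm_smul,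
    Real.norm_of_nonneg hβ.le, hd3] at htaylor
  linarith

/-- decrease along a negative curvature step with fixed stepsize. -/
theorem two_step_negative_curvature_decrease
    (n : ℕ) (hn : 1 ≤ n)
    (f : EuclideanSpace ℝ (Fin n) → ℝ) (hf : ContDiff ℝ 2 f)
    (H : EuclideanSpace ℝ (Fin n) → EuclideanSpace ℝ (Fin n) →L[ℝ] EuclideanSpace ℝ (Fin n))
    (hH : ∀ x, HasFDerivAt (gradient f) (H x) x)
    (hHsym : ∀ x u v, ⟪H x u, v⟫ = ⟪u, H x v⟫)
    (lam : EuclideanSpace ℝ (Fin n) → ℝ)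
    (hlam : ∀ x, lam x =
      sInf {r : ℝ | ∃ u : EuclideanSpace ℝ (Fin n), ‖u‖ = 1 ∧ r = ⟪u, H x u⟫})
    (σ : ℝ) (hσ : 0 < σ)
    (hHLip : ∀ x y, ‖H x - H y‖ ≤ σ * ‖x - y‖)
    (x : EuclideanSpace ℝ (Fin n)) (hx : lam x < 0)
    (γ θ : ℝ) (hγ : γ ∈ Set.Ioc (0 : ℝ) 1) (hθ : 0 < θ)
    (d : EuclideanSpace ℝ (Fin n))
    (hd1 : ⟪d, H x d⟫ ≤ γ * lam x * ‖d‖ ^ 2)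
    (hd2 : ⟪gradient f x, d⟫ ≤ 0)
    (hd3 : ‖d‖ = θ * |lam x|) :
    ∀ β ∈ Set.Ioo (0 : ℝ) (3 * γ / (σ * θ)),
      f (x + β • d) ≤ f x - (1/2 * β ^ 2 * θ ^ 2 * (γ - 1/3 * σ * β * θ)) * |lam x| ^ 3 ∧
      0 < 1/2 * β ^ 2 * θ ^ 2 * (γ - 1/3 * σ * β * θ) :=
  two_step_negative_curvature_decrease_general n f hf H hH lam σ hσ hHLip x hx γ θ hθ d hd1 hd2 hd3
end

section
/- Suppose the gradient map g is Lipschitz continuous with constant L > 0. Let x̂ ∈ E with g(x̂) ≠ 0, let δ, ζ ∈ (0,1] and η ∈ [1,∞), and let ŝ ∈ E satisfy −⟪g(x̂), ŝ⟫ ≥ δ ‖ŝ‖ ‖g(x̂)‖ and ζ ‖g(x̂)‖ ≤ ‖ŝ‖ ≤ η ‖g(x̂)‖. Then for every α ∈ (0, 2δζ/(Lη²)) one has f(x̂ + α ŝ) ≤ f(x̂) − c₂(α) ‖g(x̂)‖², where c₂(α) := α (δζ − (1/2) L α η²), and moreover c₂(α) > 0. -/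
open scoped RealInnerProductSpace

/-!
Along the segment from `x` to `y`, the derivative of `t ↦ f (x + t • (y - x))` exceeds its
value at `0` by at most `L t ‖y - x‖²`, because the gradient is `L`-Lipschitz; integrating gives
the quadratic upper bound `f y ≤ f x + ⟪∇f x, y - x⟫ + L/2 ‖y - x‖²`. At `y = x̂ + α ŝ` the angle
and length conditions on `ŝ` bound the linear term by `-α δ ζ ‖∇f x̂‖²` and the quadratic term by
`L α² η² / 2 ‖∇f x̂‖²`, and `c₂(α) > 0` is exactly the condition `α < 2δζ / (L η²)`.
-/

section DescentLemma

variable {F : Type*} [NormedAddCommGroup F] [InnerProductSpace ℝ F] [CompleteSpace F]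
  {f : F → ℝ} {L : ℝ}

theorem hasDerivAt_comp_add_smul {x v : F} {t : ℝ} (hf : DifferentiableAt ℝ f (x + t • v)) :
    HasDerivAt (fun t : ℝ => f (x + t • v)) ⟪gradient f (x + t • v), v⟫ t := by
  have hline : HasDerivAt (fun t : ℝ => x + t • v) v t := by
    simpa using ((hasDerivAt_id t).smul_const v).const_add x
  exact hf.hasGradientAt.hasFDerivAt.comp_hasDerivAt t hline

theorem inner_gradient_add_smul_sub_le
    (hgLip : ∀ x y, ‖gradient f x - gradient f y‖ ≤ L * ‖x - y‖) (x v : F) {t : ℝ} (ht : 0 ≤ t) :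
    ⟪gradient f (x + t • v) - gradient f x, v⟫ ≤ L * t * ‖v‖ ^ 2 :=
  calc ⟪gradient f (x + t • v) - gradient f x, v⟫
      ≤ ‖gradient f (x + t • v) - gradient f x‖ * ‖v‖ := real_inner_le_norm _ _
    _ ≤ L * ‖(x + t • v) - x‖ * ‖v‖ := by gcongr; exact hgLip _ _
    _ = L * t * ‖v‖ ^ 2 := by
      rw [add_sub_cancel_left, norm_smul, Real.norm_of_nonneg ht]
      ring

/-- The descent lemma of smooth optimization. -/
theorem le_add_inner_gradient_add_sq_norm (hf : Differentiable ℝ f)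
    (hgLip : ∀ x y, ‖gradient f x - gradient f y‖ ≤ L * ‖x - y‖) (x y : F) :
    f y ≤ f x + ⟪gradient f x, y - x⟫ + L / 2 * ‖y - x‖ ^ 2 := by
  set v := y - x
  set h : ℝ → ℝ := fun t => f (x + t • v) - t * ⟪gradient f x, v⟫ - L / 2 * t ^ 2 * ‖v‖ ^ 2
  have hderiv (t : ℝ) :
      HasDerivAt h (⟪gradient f (x + t • v), v⟫ - ⟪gradient f x, v⟫ - L * t * ‖v‖ ^ 2) t := by
    have hquad : HasDerivAt (fun t : ℝ => L / 2 * t ^ 2 * ‖v‖ ^ 2) (L * t * ‖v‖ ^ 2) t :=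
      (((hasDerivAt_pow 2 t).const_mul (L / 2)).mul_const _).congr_deriv (by push_cast; ring)
    exact ((hasDerivAt_comp_add_smul (hf _)).sub ((hasDerivAt_id t).mul_const _)).sub hquad
      |>.congr_deriv (by simp)
  have hanti : AntitoneOn h (Set.Icc 0 1) := by
    refine antitoneOn_of_deriv_nonpos (convex_Icc 0 1)
      (fun t _ => (hderiv t).continuousAt.continuousWithinAt)
      (fun t _ => (hderiv t).differentiableAt.differentiableWithinAt) fun t ht => ?_
    rw [interior_Icc] at ht
    rw [(hderiv t).deriv, ← inner_sub_left]
    linarith [inner_gradient_add_smul_sub_le hgLip x v ht.1.le]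
  have h01 := hanti (Set.left_mem_Icc.2 zero_le_one) (Set.right_mem_Icc.2 zero_le_one) zero_le_one
  simp only [h, zero_smul, one_smul, add_zero, add_sub_cancel, zero_mul, sub_zero, one_mul,
    one_pow, ne_eq, OfNat.ofNat_ne_zero, not_false_eq_true, zero_pow, mul_zero, v] at h01
  linarith

end DescentLemma

theorem inner_le_neg_mul_sq_norm {F : Type*} [NormedAddCommGroup F] [InnerProductSpace ℝ F]
    {g s : F} {δ ζ : ℝ} (hδ : 0 ≤ δ) (hangle : -⟪g, s⟫ ≥ δ * ‖s‖ * ‖g‖)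
    (hlen : ζ * ‖g‖ ≤ ‖s‖) :
    ⟪g, s⟫ ≤ -(δ * ζ * ‖g‖ ^ 2) := by
  have : δ * (ζ * ‖g‖) * ‖g‖ ≤ δ * ‖s‖ * ‖g‖ := by gcongr
  linarith

theorem two_step_descent_decrease_general
    (n : ℕ)
    (f : EuclideanSpace ℝ (Fin n) → ℝ) (hf : ContDiff ℝ 1 f)
    (L : ℝ) (hL : 0 < L)
    (hgLip : ∀ x y, ‖gradient f x - gradient f y‖ ≤ L * ‖x - y‖)
    (xhat : EuclideanSpace ℝ (Fin n))
    (δ ζ : ℝ) (hδ : δ ∈ Set.Ioc (0 : ℝ) 1)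
    (η : ℝ) (hη : 1 ≤ η)
    (shat : EuclideanSpace ℝ (Fin n))
    (hs1 : -⟪gradient f xhat, shat⟫ ≥ δ * ‖shat‖ * ‖gradient f xhat‖)
    (hs2 : ζ * ‖gradient f xhat‖ ≤ ‖shat‖)
    (hs3 : ‖shat‖ ≤ η * ‖gradient f xhat‖) :
    ∀ α ∈ Set.Ioo (0 : ℝ) (2 * δ * ζ / (L * η ^ 2)),
      f (xhat + α • shat) ≤
        f xhat - (α * (δ * ζ - 1/2 * L * α * η ^ 2)) * ‖gradient f xhat‖ ^ 2 ∧
      0 < α * (δ * ζ - 1/2 * L * α * η ^ 2) := by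
  rintro α ⟨hα0, hα⟩
  set g := gradient f xhat
  have hαL : α * (L * η ^ 2) < 2 * δ * ζ :=
    (lt_div_iff₀ (by positivity [zero_lt_one.trans_le hη])).1 hα
  have hinner : α * ⟪g, shat⟫ ≤ α * -(δ * ζ * ‖g‖ ^ 2) :=
    mul_le_mul_of_nonneg_left (inner_le_neg_mul_sq_norm hδ.1.le hs1 hs2) hα0.le
  have hsq : L / 2 * α ^ 2 * ‖shat‖ ^ 2 ≤ L / 2 * α ^ 2 * (η * ‖g‖) ^ 2 := by
    gcongr
  refine ⟨?_, mul_pos hα0 (by linarith)⟩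
  calc f (xhat + α • shat)
      ≤ f xhat + ⟪g, α • shat⟫ + L / 2 * ‖α • shat‖ ^ 2 := by
        simpa only [add_sub_cancel_left] using le_add_inner_gradient_add_sq_norm (hf.differentiable one_ne_zero) hgLip
          xhat (xhat + α • shat)
    _ = f xhat + α * ⟪g, shat⟫ + L / 2 * α ^ 2 * ‖shat‖ ^ 2 := by
        rw [inner_smul_right, norm_smul, Real.norm_of_nonneg hα0.le]
        ring
    _ ≤ _ := by linarith

/-- decrease along a descent step with fixed stepsize. -/
theorem two_step_descent_decrease
    (n : ℕ) (hn : 1 ≤ n)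
    (f : EuclideanSpace ℝ (Fin n) → ℝ) (hf : ContDiff ℝ 1 f)
    (L : ℝ) (hL : 0 < L)
    (hgLip : ∀ x y, ‖gradient f x - gradient f y‖ ≤ L * ‖x - y‖)
    (xhat : EuclideanSpace ℝ (Fin n)) (hxhat : gradient f xhat ≠ 0)
    (δ ζ : ℝ) (hδ : δ ∈ Set.Ioc (0 : ℝ) 1) (hζ : ζ ∈ Set.Ioc (0 : ℝ) 1)
    (η : ℝ) (hη : 1 ≤ η)
    (shat : EuclideanSpace ℝ (Fin n))
    (hs1 : -⟪gradient f xhat, shat⟫ ≥ δ * ‖shat‖ * ‖gradient f xhat‖)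
    (hs2 : ζ * ‖gradient f xhat‖ ≤ ‖shat‖)
    (hs3 : ‖shat‖ ≤ η * ‖gradient f xhat‖) :
    ∀ α ∈ Set.Ioo (0 : ℝ) (2 * δ * ζ / (L * η ^ 2)),
      f (xhat + α • shat) ≤
        f xhat - (α * (δ * ζ - 1/2 * L * α * η ^ 2)) * ‖gradient f xhat‖ ^ 2 ∧
      0 < α * (δ * ζ - 1/2 * L * α * η ^ 2) :=
  two_step_descent_decrease_general n f hf L hL hgLip xhat δ ζ hδ η hη shat hs1 hs2 hs3
end

section
/- Let d, w ∈ E with d ≠ 0, let A be a self-adjoint continuous linear operator on E, let γ ∈ (0,1], σ_k > 0, and λ < 0, and suppose c := ⟪d, A d⟫ ≤ γ λ ‖d‖² and ⟪w, d⟫ ≤ 0. Define m_d(β) := −β ⟪w, d⟫ − (1/2) β² ⟪d, A d⟫ − (σ_k/6) β³ ‖d‖³ and β_k := (−c + √(c² − 2 σ_k ‖d‖³ ⟪w, d⟫)) / (σ_k ‖d‖³). Then m_d(β_k) ≥ (2γ³/(3σ_k²)) |λ|³. -/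
/-!
Write `a = σₖ‖d‖³`, `b = ⟪w, d⟫` and `c = ⟪d, A d⟫`, so that `m_d(β) = -βb - cβ²/2 - aβ³/6`.
The step `β_k` is the positive root of `m_d'`, i.e. of `aβ²/2 + cβ + b`; using this quadratic
relation, `m_d(β_k) = (x³/3 - u x²/2) / a²` with `x = aβ_k` and `u = -c`. Since `b ≤ 0` we have
`x ≥ 2u`, where `x ↦ x³/3 - u x²/2` is increasing, so `m_d(β_k) ≥ 2u³/(3a²)`. Finally the curvature
hypothesis gives `u ≥ γ|λ|‖d‖²`, and the powers of `‖d‖` cancel.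
-/

open scoped RealInnerProductSpace

namespace CubicModel

noncomputable def cubicModel (a b c β : ℝ) : ℝ := -β * b - c / 2 * β ^ 2 - a / 6 * β ^ 3

/-- The nonnegative critical point of `cubicModel a b c`. -/
noncomputable def cubicModelStep (a b c : ℝ) : ℝ := (-c + √(c ^ 2 - 2 * a * b)) / a

variable {a b c : ℝ}

theorem cubicModelStep_isRoot (ha : a ≠ 0) (hdisc : 0 ≤ c ^ 2 - 2 * a * b) :
    a / 2 * (cubicModelStep a b c * cubicModelStep a b c) + c * cubicModelStep a b c + b = 0 := by
  have hdiscrim : discrim (a / 2) c b = √(c ^ 2 - 2 * a * b) * √(c ^ 2 - 2 * a * b) := by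
    rw [Real.mul_self_sqrt hdisc, discrim]
    ring
  refine (quadratic_eq_zero_iff (div_ne_zero ha two_ne_zero) hdiscrim _).2 (Or.inl ?_)
  rw [cubicModelStep, mul_div_cancel₀ a two_ne_zero]

theorem neg_two_mul_le_mul_cubicModelStep (ha : 0 < a) (hb : b ≤ 0) :
    -2 * c ≤ a * cubicModelStep a b c := by
  have hsqrt : -c ≤ √(c ^ 2 - 2 * a * b) :=
    calc -c ≤ |c| := neg_le_abs c
      _ = √(c ^ 2) := (Real.sqrt_sq_eq_abs c).symm
      _ ≤ √(c ^ 2 - 2 * a * b) := Real.sqrt_le_sqrt (by nlinarith)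
  rw [cubicModelStep, mul_div_cancel₀ _ ha.ne']
  linarith

theorem cubicModel_eq_of_isRoot {β : ℝ} (h : a / 2 * (β * β) + c * β + b = 0) :
    cubicModel a b c β = a / 3 * β ^ 3 + c / 2 * β ^ 2 := by
  rw [cubicModel]
  linear_combination (-β) * h

theorem two_mul_pow_three_div_three_le {u x : ℝ} (hu : 0 ≤ u) (hx : 2 * u ≤ x) :
    2 * u ^ 3 / 3 ≤ x ^ 3 / 3 - u * x ^ 2 / 2 := by
  -- `2x³ - 3ux² - 4u³ = (x - 2u)(2x² + ux + 2u²)`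
  have hfactor : 0 ≤ (x - 2 * u) * (2 * x ^ 2 + u * x + 2 * u ^ 2) :=
    mul_nonneg (by linarith) (by nlinarith)
  linarith

theorem le_cubicModel_cubicModelStep (ha : 0 < a) (hb : b ≤ 0) (hc : c ≤ 0) :
    2 * (-c) ^ 3 / (3 * a ^ 2) ≤ cubicModel a b c (cubicModelStep a b c) := by
  set β := cubicModelStep a b c
  have hdisc : 0 ≤ c ^ 2 - 2 * a * b := by nlinarith
  have hstep : -2 * c ≤ a * β := neg_two_mul_le_mul_cubicModelStep ha hb
  have hvalue : cubicModel a b c β = ((a * β) ^ 3 / 3 - (-c) * (a * β) ^ 2 / 2) / a ^ 2 := by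
    rw [cubicModel_eq_of_isRoot (cubicModelStep_isRoot ha.ne' hdisc)]
    field_simp
    ring
  calc 2 * (-c) ^ 3 / (3 * a ^ 2) = 2 * (-c) ^ 3 / 3 / a ^ 2 := by ring
    _ ≤ _ := by
      rw [hvalue]
      gcongr
      exact two_mul_pow_three_div_three_le (by linarith) (by linarith)

end CubicModel

open CubicModel in
theorem cubic_model_reduction_lower_bound_general
    (n : ℕ)
    (d w : EuclideanSpace ℝ (Fin n)) (hd : d ≠ 0)
    (A : EuclideanSpace ℝ (Fin n) →L[ℝ] EuclideanSpace ℝ (Fin n))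
    (γ σk lam : ℝ) (hγ : γ ∈ Set.Ioc (0 : ℝ) 1) (hσk : 0 < σk) (hlam : lam < 0)
    (c : ℝ) (hc : c = ⟪d, A d⟫)
    (hcurv : c ≤ γ * lam * ‖d‖ ^ 2)
    (hwd : ⟪w, d⟫ ≤ 0)
    (md : ℝ → ℝ)
    (hmd : ∀ β, md β = -β * ⟪w, d⟫ - 1/2 * β ^ 2 * ⟪d, A d⟫ - σk / 6 * β ^ 3 * ‖d‖ ^ 3)
    (βk : ℝ)
    (hβk : βk = (-c + Real.sqrt (c ^ 2 - 2 * σk * ‖d‖ ^ 3 * ⟪w, d⟫)) / (σk * ‖d‖ ^ 3)) :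
    md βk ≥ 2 * γ ^ 3 / (3 * σk ^ 2) * |lam| ^ 3 := by
  have hnorm : 0 < ‖d‖ := norm_pos_iff.mpr hd
  have hmd_eq :
      md βk = cubicModel (σk * ‖d‖ ^ 3) ⟪w, d⟫ c (cubicModelStep (σk * ‖d‖ ^ 3) ⟪w, d⟫ c) := by
    rw [hmd, ← hc, hβk, cubicModel, cubicModelStep]
    ring_nf
  have hγ₀ : 0 < γ := hγ.1
  have hcurv' : γ * |lam| * ‖d‖ ^ 2 ≤ -c := by
    rw [abs_of_neg hlam]
    linarith
  have hc₀ : c ≤ 0 := by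
    have : 0 ≤ γ * |lam| * ‖d‖ ^ 2 := by positivity
    linarith
  rw [ge_iff_le, hmd_eq]
  calc 2 * γ ^ 3 / (3 * σk ^ 2) * |lam| ^ 3
      = 2 * (γ * |lam| * ‖d‖ ^ 2) ^ 3 / (3 * (σk * ‖d‖ ^ 3) ^ 2) := by
        field_simp
    _ ≤ 2 * (-c) ^ 3 / (3 * (σk * ‖d‖ ^ 3) ^ 2) := by gcongr
    _ ≤ _ := le_cubicModel_cubicModelStep (by positivity) hwd hc₀

/-- lower bound for the cubic model reduction at its maximizer. -/
theorem cubic_model_reduction_lower_bound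
    (n : ℕ) (hn : 1 ≤ n)
    (d w : EuclideanSpace ℝ (Fin n)) (hd : d ≠ 0)
    (A : EuclideanSpace ℝ (Fin n) →L[ℝ] EuclideanSpace ℝ (Fin n))
    (hAsym : ∀ u v, ⟪A u, v⟫ = ⟪u, A v⟫)
    (γ σk lam : ℝ) (hγ : γ ∈ Set.Ioc (0 : ℝ) 1) (hσk : 0 < σk) (hlam : lam < 0)
    (c : ℝ) (hc : c = ⟪d, A d⟫)
    (hcurv : c ≤ γ * lam * ‖d‖ ^ 2)
    (hwd : ⟪w, d⟫ ≤ 0)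
    (md : ℝ → ℝ)
    (hmd : ∀ β, md β = -β * ⟪w, d⟫ - 1/2 * β ^ 2 * ⟪d, A d⟫ - σk / 6 * β ^ 3 * ‖d‖ ^ 3)
    (βk : ℝ)
    (hβk : βk = (-c + Real.sqrt (c ^ 2 - 2 * σk * ‖d‖ ^ 3 * ⟪w, d⟫)) / (σk * ‖d‖ ^ 3)) :
    md βk ≥ 2 * γ ^ 3 / (3 * σk ^ 2) * |lam| ^ 3 :=
  cubic_model_reduction_lower_bound_general n d w hd A γ σk lam hγ hσk hlam c hc hcurv hwd md hmd βk
    hβk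
end

section
/- Let d, w ∈ E with d ≠ 0, let A be a self-adjoint continuous linear operator on E, let σ_k > 0, and suppose c := ⟪d, A d⟫ < 0 and ⟪w, d⟫ ≤ 0. Define m_d(β) := −β ⟪w, d⟫ − (1/2) β² ⟪d, A d⟫ − (σ_k/6) β³ ‖d‖³ and β_k := (−c + √(c² − 2 σ_k ‖d‖³ ⟪w, d⟫)) / (σ_k ‖d‖³). Then β_k > 0 and β_k maximizes m_d over the positive reals, i.e., m_d(β) ≤ m_d(β_k) for all β > 0. -/
open scoped RealInnerProductSpace

/-!
With `b = ⟪w, d⟫ ≤ 0`, `c = ⟪d, A d⟫` and `s = σₖ‖d‖³ > 0`, the model is the real cubic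
`m(β) = -bβ - cβ²/2 - sβ³/6`, and `βₖ` is the larger root `r` of `m'(β) = -(sβ²/2 + cβ + b)`.
Since `r` is a root of `m'`, `m(r) - m(β) = (r - β)² (c/2 + s(2r + β)/6)`, and the second factor
is at least `|c|/6 ≥ 0` for `β ≥ 0` because `sr = -c + √(c² - 2sb) ≥ -c + |c|`.
-/

namespace CubicModel

/-- The cubic model reduction along a direction, in terms of `b = ⟪g, d⟫`, `c = ⟪d, H d⟫` and
`s = σ‖d‖³`. -/
noncomputable def reduction (b c s β : ℝ) : ℝ :=
  -β * b - 1 / 2 * β ^ 2 * c - s / 6 * β ^ 3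

/-- The larger root of `s β² / 2 + c β + b`, the derivative of `-reduction b c s`. -/
noncomputable def step (b c s : ℝ) : ℝ :=
  (-c + √(c ^ 2 - 2 * s * b)) / s

variable {b c s : ℝ}

variable (c) in
lemma discr_nonneg (hs : 0 ≤ s) (hb : b ≤ 0) : 0 ≤ c ^ 2 - 2 * s * b := by
  nlinarith [sq_nonneg c, mul_nonneg hs (neg_nonneg.mpr hb)]

variable (c) in
lemma abs_le_sqrt_discr (hs : 0 ≤ s) (hb : b ≤ 0) : |c| ≤ √(c ^ 2 - 2 * s * b) :=
  Real.abs_le_sqrt (by nlinarith [mul_nonneg hs (neg_nonneg.mpr hb)])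

lemma mul_step (hs : s ≠ 0) : s * step b c s = -c + √(c ^ 2 - 2 * s * b) := by
  unfold step; field_simp

lemma step_isRoot (hs : s ≠ 0) (hdisc : 0 ≤ c ^ 2 - 2 * s * b) :
    s / 2 * step b c s ^ 2 + c * step b c s + b = 0 := by
  refine (mul_right_inj' hs).mp ?_
  linear_combination (1 / 2 * (s * step b c s) + 1 / 2 * (√(c ^ 2 - 2 * s * b) + c)) *
    mul_step (b := b) (c := c) hs + 1 / 2 * Real.sq_sqrt hdisc

lemma reduction_sub_of_isRoot {r : ℝ} (hr : s / 2 * r ^ 2 + c * r + b = 0) (β : ℝ) :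
    reduction b c s r - reduction b c s β = (r - β) ^ 2 * (c / 2 + s / 6 * (2 * r + β)) := by
  unfold reduction
  linear_combination (β - r) * hr

lemma step_pos (hs : 0 < s) (hc : c < 0) (hb : b ≤ 0) : 0 < step b c s := by
  have := abs_le_sqrt_discr c hs.le hb
  rw [abs_of_neg hc] at this
  exact div_pos (by linarith) hs

lemma reduction_le_step (hs : 0 < s) (hb : b ≤ 0) {β : ℝ} (hβ : 0 ≤ β) :
    reduction b c s β ≤ reduction b c s (step b c s) := by
  have hfactor : 0 ≤ c / 2 + s / 6 * (2 * step b c s + β) := by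
    have hD := abs_le_sqrt_discr c hs.le hb
    have hsβ := mul_nonneg hs.le hβ
    linarith [mul_step (b := b) (c := c) hs.ne', neg_abs_le c, abs_nonneg c]
  have hdiff := reduction_sub_of_isRoot (step_isRoot hs.ne' (discr_nonneg c hs.le hb)) β
  linarith [mul_nonneg (sq_nonneg (step b c s - β)) hfactor]

end CubicModel

open CubicModel in
theorem cubic_model_reduction_maximizer_general
    (n : ℕ)
    (d w : EuclideanSpace ℝ (Fin n)) (hd : d ≠ 0)
    (A : EuclideanSpace ℝ (Fin n) →L[ℝ] EuclideanSpace ℝ (Fin n))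
    (σk : ℝ) (hσk : 0 < σk)
    (c : ℝ) (hc : c = ⟪d, A d⟫) (hcneg : c < 0)
    (hwd : ⟪w, d⟫ ≤ 0)
    (md : ℝ → ℝ)
    (hmd : ∀ β, md β = -β * ⟪w, d⟫ - 1/2 * β ^ 2 * ⟪d, A d⟫ - σk / 6 * β ^ 3 * ‖d‖ ^ 3)
    (βk : ℝ)
    (hβk : βk = (-c + Real.sqrt (c ^ 2 - 2 * σk * ‖d‖ ^ 3 * ⟪w, d⟫)) / (σk * ‖d‖ ^ 3)) :
    0 < βk ∧ ∀ β : ℝ, 0 < β → md β ≤ md βk := by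
  have hs : 0 < σk * ‖d‖ ^ 3 := by have := norm_pos_iff.mpr hd; positivity
  have hmd' : md = reduction ⟪w, d⟫ c (σk * ‖d‖ ^ 3) := by
    funext β; rw [hmd, reduction, hc]; ring
  have hβk' : βk = step ⟪w, d⟫ c (σk * ‖d‖ ^ 3) := by
    rw [hβk, step, mul_assoc 2 σk]
  subst hmd' hβk'
  exact ⟨step_pos hs hcneg hwd, fun β hβ => reduction_le_step hs hwd hβ.le⟩

/-- the stepsize βk maximizes the cubic model reduction over the positive reals. -/
theorem cubic_model_reduction_maximizer
    (n : ℕ) (hn : 1 ≤ n)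
    (d w : EuclideanSpace ℝ (Fin n)) (hd : d ≠ 0)
    (A : EuclideanSpace ℝ (Fin n) →L[ℝ] EuclideanSpace ℝ (Fin n))
    (hAsym : ∀ u v, ⟪A u, v⟫ = ⟪u, A v⟫)
    (σk : ℝ) (hσk : 0 < σk)
    (c : ℝ) (hc : c = ⟪d, A d⟫) (hcneg : c < 0)
    (hwd : ⟪w, d⟫ ≤ 0)
    (md : ℝ → ℝ)
    (hmd : ∀ β, md β = -β * ⟪w, d⟫ - 1/2 * β ^ 2 * ⟪d, A d⟫ - σk / 6 * β ^ 3 * ‖d‖ ^ 3)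
    (βk : ℝ)
    (hβk : βk = (-c + Real.sqrt (c ^ 2 - 2 * σk * ‖d‖ ^ 3 * ⟪w, d⟫)) / (σk * ‖d‖ ^ 3)) :
    0 < βk ∧ ∀ β : ℝ, 0 < β → md β ≤ md βk :=
  cubic_model_reduction_maximizer_general n d w hd A σk hσk c hc hcneg hwd md hmd βk hβk
end

section
/- (Per-iteration decrease of the dynamic method.) Let x ∈ E, δ, γ ∈ (0,1], L_k > 0, σ_k > 0. Let s, d ∈ E, not both zero, satisfy: either g(x) = 0 and s = 0, or s ≠ 0 and −⟪g(x), s⟫ ≥ δ ‖s‖ ‖g(x)‖; and either λ(x) ≥ 0 and d = 0, or d ≠ 0 with ⟪d, H(x) d⟫ ≤ γ λ(x) ‖d‖² < 0 and ⟪g(x), d⟫ ≤ 0. Define m_s(α) := −α ⟪g(x), s⟫ − (1/2) L_k α² ‖s‖² and m_d(β) := −β ⟪g(x), d⟫ − (1/2) β² ⟪d, H(x) d⟫ − (σ_k/6) β³ ‖d‖³; set α_k := −⟪g(x), s⟫/(L_k ‖s‖²) if s ≠ 0 and α_k := 0 otherwise, and set β_k := (−c + √(c² − 2 σ_k ‖d‖³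 ⟪g(x), d⟫))/(σ_k ‖d‖³) with c := ⟪d, H(x) d⟫ if d ≠ 0 and β_k := 0 otherwise. Suppose x⁺ ∈ E satisfies: if m_s(α_k) ≥ m_d(β_k) then f(x⁺) ≤ f(x) − m_s(α_k), and otherwise f(x⁺) ≤ f(x) − m_d(β_k). Then f(x) − f(x⁺) ≥ max{ (δ²/(2L_k)) ‖g(x)‖², (2γ³/(3σ_k²)) |(λ(x))₋|³ }. -/
/-!
The step actually taken realises the larger of the two model decreases `ms αk` and `md βk`, so
it suffices to bound each of them. `αk` maximises the concave quadratic `ms`, with value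
`⟪g, s⟫² / (2 Lk ‖s‖²)`, and the angle condition turns this into `δ² ‖g‖² / (2 Lk)`.
`βk` is the positive critical point of the cubic `md`; there `md βk = A βk³ / 3 + c βk² / 2` with
`A = σk ‖d‖³` and `c = ⟪d, H d⟫ < 0`, and `A βk ≥ -2c` gives `md βk ≥ 2 |c|³ / (3 A²)`.
Finally `|c| ≥ γ |λ| ‖d‖²`, which yields the curvature term.
-/

open scoped RealInnerProductSpace

theorem max_le_sub_of_step {R : Type*} [AddCommGroup R] [LinearOrder R] [IsOrderedAddMonoid R]
    {a b x y : R} (ha : b ≤ a → y ≤ x - a) (hb : a < b → y ≤ x - b) :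
    max a b ≤ x - y := by
  rcases le_or_gt b a with h | h
  · rw [max_eq_left h]; exact le_sub_comm.mp (ha h)
  · rw [max_eq_right h.le]; exact le_sub_comm.mp (hb h)

section QuadraticModel

variable {F : Type*} [NormedAddCommGroup F] [InnerProductSpace ℝ F]

theorem quadratic_model_at_maximizer (g s : F) {L α : ℝ} (hL : L ≠ 0) (hs : s ≠ 0)
    (hα : α = -⟪g, s⟫ / (L * ‖s‖ ^ 2)) :
    -α * ⟪g, s⟫ - 1 / 2 * L * α ^ 2 * ‖s‖ ^ 2 = ⟪g, s⟫ ^ 2 / (2 * L * ‖s‖ ^ 2) := by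
  have : ‖s‖ ≠ 0 := norm_ne_zero_iff.mpr hs
  subst hα
  field_simp
  ring

theorem le_quadratic_model_at_maximizer (g s : F) {δ L α : ℝ} (hδ : 0 ≤ δ) (hL : 0 < L)
    (hs : s ≠ 0) (hangle : -⟪g, s⟫ ≥ δ * ‖s‖ * ‖g‖) (hα : α = -⟪g, s⟫ / (L * ‖s‖ ^ 2)) :
    δ ^ 2 / (2 * L) * ‖g‖ ^ 2 ≤ -α * ⟪g, s⟫ - 1 / 2 * L * α ^ 2 * ‖s‖ ^ 2 := by
  rw [quadratic_model_at_maximizer g s hL.ne' hs hα]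
  have hS : 0 < ‖s‖ := norm_pos_iff.mpr hs
  have hsq : (δ * ‖s‖ * ‖g‖) ^ 2 ≤ ⟪g, s⟫ ^ 2 := by
    rw [← neg_sq ⟪g, s⟫]
    exact pow_le_pow_left₀ (by positivity) hangle 2
  calc δ ^ 2 / (2 * L) * ‖g‖ ^ 2 = (δ * ‖s‖ * ‖g‖) ^ 2 / (2 * L * ‖s‖ ^ 2) := by
        field_simp
    _ ≤ ⟪g, s⟫ ^ 2 / (2 * L * ‖s‖ ^ 2) := by gcongr

end QuadraticModel

section CubicModel

/-- `A β² + 2 c β + 2 b = 0` is the critical-point equation of the cubic model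
`β ↦ -β b - β² c / 2 - A β³ / 6`. -/
theorem cubic_model_root {A b c β : ℝ} (hA : 0 < A) (hc : c < 0) (hb : b ≤ 0)
    (hβ : β = (-c + √(c ^ 2 - 2 * A * b)) / A) :
    A * β ^ 2 + 2 * c * β + 2 * b = 0 ∧ -2 * c ≤ A * β := by
  have hD : c ^ 2 ≤ c ^ 2 - 2 * A * b := by nlinarith
  have hAβ : A * β + c = √(c ^ 2 - 2 * A * b) := by
    rw [hβ]; field_simp; ring
  have hsqrt : -c ≤ √(c ^ 2 - 2 * A * b) := by
    rw [← abs_of_neg hc, ← Real.sqrt_sq_eq_abs]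
    exact Real.sqrt_le_sqrt hD
  refine ⟨?_, by linarith⟩
  have hsq : (A * β + c) ^ 2 = c ^ 2 - 2 * A * b := by
    rw [hAβ, Real.sq_sqrt ((sq_nonneg c).trans hD)]
  have : A * (A * β ^ 2 + 2 * c * β + 2 * b) = 0 := by linear_combination hsq
  exact (mul_eq_zero.mp this).resolve_left hA.ne'

theorem cubic_lower_bound {A c β : ℝ} (hA : 0 < A) (hβ : -2 * c ≤ A * β) :
    2 * (-c) ^ 3 / (3 * A ^ 2) ≤ A / 3 * β ^ 3 + c / 2 * β ^ 2 := by
  rw [div_le_iff₀ (by positivity)]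
  -- `6 A² · (rhs - lhs) = (t + 2c)(2t² - ct + 2c²)` with `t = Aβ`
  have hq : 0 ≤ 2 * (A * β) ^ 2 - c * (A * β) + 2 * c ^ 2 := by
    nlinarith [sq_nonneg (A * β - c / 4), sq_nonneg c]
  nlinarith [mul_nonneg (by linarith : 0 ≤ A * β + 2 * c) hq]

theorem le_cubic_model_at_root {A b c β : ℝ} (hA : 0 < A) (hc : c < 0) (hb : b ≤ 0)
    (hβ : β = (-c + √(c ^ 2 - 2 * A * b)) / A) :
    2 * (-c) ^ 3 / (3 * A ^ 2) ≤ -β * b - 1 / 2 * β ^ 2 * c - A / 6 * β ^ 3 := by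
  obtain ⟨hroot, hAβ⟩ := cubic_model_root hA hc hb hβ
  calc 2 * (-c) ^ 3 / (3 * A ^ 2) ≤ A / 3 * β ^ 3 + c / 2 * β ^ 2 :=
        cubic_lower_bound hA hAβ
    _ = -β * b - 1 / 2 * β ^ 2 * c - A / 6 * β ^ 3 := by linear_combination (β / 2) * hroot

variable {F : Type*} [NormedAddCommGroup F] [InnerProductSpace ℝ F]

theorem le_cubic_model_of_negative_curvature (g d : F) {c l γ σ β : ℝ} (hd : d ≠ 0)
    (hγ : 0 < γ) (hσ : 0 < σ) (hc : c ≤ γ * l * ‖d‖ ^ 2) (hneg : γ * l * ‖d‖ ^ 2 < 0)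
    (hgd : ⟪g, d⟫ ≤ 0)
    (hβ : β = (-c + √(c ^ 2 - 2 * σ * ‖d‖ ^ 3 * ⟪g, d⟫)) / (σ * ‖d‖ ^ 3)) :
    2 * γ ^ 3 / (3 * σ ^ 2) * |min 0 l| ^ 3 ≤
      -β * ⟪g, d⟫ - 1 / 2 * β ^ 2 * c - σ / 6 * β ^ 3 * ‖d‖ ^ 3 := by
  have hD : 0 < ‖d‖ := norm_pos_iff.mpr hd
  have hl : l < 0 := by
    by_contra! hl
    exact hneg.not_ge (by positivity)
  rw [min_eq_right hl.le, abs_of_neg hl]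
  have hA : 0 < σ * ‖d‖ ^ 3 := by positivity
  calc 2 * γ ^ 3 / (3 * σ ^ 2) * (-l) ^ 3
        = 2 * (γ * -l * ‖d‖ ^ 2) ^ 3 / (3 * (σ * ‖d‖ ^ 3) ^ 2) := by
          field_simp
    _ ≤ 2 * (-c) ^ 3 / (3 * (σ * ‖d‖ ^ 3) ^ 2) := by
          have : 0 ≤ γ * -l * ‖d‖ ^ 2 := by have := neg_nonneg.mpr hl.le; positivity
          gcongr
          linarith
    _ ≤ -β * ⟪g, d⟫ - 1 / 2 * β ^ 2 * c - σ * ‖d‖ ^ 3 / 6 * β ^ 3 :=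
          le_cubic_model_at_root hA (hc.trans_lt hneg) hgd (by rw [hβ]; ring_nf)
    _ = -β * ⟪g, d⟫ - 1 / 2 * β ^ 2 * c - σ / 6 * β ^ 3 * ‖d‖ ^ 3 := by ring

end CubicModel

theorem dynamic_method_per_iteration_decrease_general
    (n : ℕ)
    (f : EuclideanSpace ℝ (Fin n) → ℝ)
    (H : EuclideanSpace ℝ (Fin n) → EuclideanSpace ℝ (Fin n) →L[ℝ] EuclideanSpace ℝ (Fin n))
    (lam : EuclideanSpace ℝ (Fin n) → ℝ)
    (x : EuclideanSpace ℝ (Fin n))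
    (δ γ : ℝ) (hδ : δ ∈ Set.Ioc (0 : ℝ) 1) (hγ : γ ∈ Set.Ioc (0 : ℝ) 1)
    (Lk σk : ℝ) (hLk : 0 < Lk) (hσk : 0 < σk)
    (s d : EuclideanSpace ℝ (Fin n))
    (hs : (gradient f x = 0 ∧ s = 0) ∨
      (s ≠ 0 ∧ -⟪gradient f x, s⟫ ≥ δ * ‖s‖ * ‖gradient f x‖))
    (hd : (0 ≤ lam x ∧ d = 0) ∨
      (d ≠ 0 ∧ ⟪d, H x d⟫ ≤ γ * lam x * ‖d‖ ^ 2 ∧ γ * lam x * ‖d‖ ^ 2 < 0 ∧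
        ⟪gradient f x, d⟫ ≤ 0))
    (ms : ℝ → ℝ)
    (hms : ∀ α, ms α = -α * ⟪gradient f x, s⟫ - 1/2 * Lk * α ^ 2 * ‖s‖ ^ 2)
    (md : ℝ → ℝ)
    (hmd : ∀ β, md β = -β * ⟪gradient f x, d⟫ - 1/2 * β ^ 2 * ⟪d, H x d⟫
      - σk / 6 * β ^ 3 * ‖d‖ ^ 3)
    (αk : ℝ)
    (hαk_ne : s ≠ 0 → αk = -⟪gradient f x, s⟫ / (Lk * ‖s‖ ^ 2))
    (hαk_eq : s = 0 → αk = 0)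
    (βk : ℝ)
    (hβk_ne : d ≠ 0 → βk = (-⟪d, H x d⟫ +
      Real.sqrt (⟪d, H x d⟫ ^ 2 - 2 * σk * ‖d‖ ^ 3 * ⟪gradient f x, d⟫)) / (σk * ‖d‖ ^ 3))
    (hβk_eq : d = 0 → βk = 0)
    (xplus : EuclideanSpace ℝ (Fin n))
    (hstep_s : ms αk ≥ md βk → f xplus ≤ f x - ms αk)
    (hstep_d : ms αk < md βk → f xplus ≤ f x - md βk) :
    f x - f xplus ≥
      max (δ ^ 2 / (2 * Lk) * ‖gradient f x‖ ^ 2)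
        (2 * γ ^ 3 / (3 * σk ^ 2) * |min 0 (lam x)| ^ 3) := by
  have hgrad : δ ^ 2 / (2 * Lk) * ‖gradient f x‖ ^ 2 ≤ ms αk := by
    rcases hs with ⟨hg, hs⟩ | ⟨hs, hangle⟩
    · simp [hms, hαk_eq hs, hg]
    · rw [hms]
      exact le_quadratic_model_at_maximizer _ s hδ.1.le hLk hs hangle (hαk_ne hs)
  have hcurv : 2 * γ ^ 3 / (3 * σk ^ 2) * |min 0 (lam x)| ^ 3 ≤ md βk := by
    rcases hd with ⟨hl, hd⟩ | ⟨hd, hc, hneg, hgd⟩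
    · simp [hmd, hβk_eq hd, min_eq_left hl]
    · rw [hmd]
      exact le_cubic_model_of_negative_curvature _ d hd hγ.1 hσk hc hneg hgd (hβk_ne hd)
  exact (max_le_max hgrad hcurv).trans (max_le_sub_of_step hstep_s hstep_d)

/-- per-iteration decrease of the dynamic method. -/
theorem dynamic_method_per_iteration_decrease
    (n : ℕ) (hn : 1 ≤ n)
    (f : EuclideanSpace ℝ (Fin n) → ℝ) (hf : ContDiff ℝ 2 f)
    (H : EuclideanSpace ℝ (Fin n) → EuclideanSpace ℝ (Fin n) →L[ℝ] EuclideanSpace ℝ (Fin n))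
    (hH : ∀ y, HasFDerivAt (gradient f) (H y) y)
    (hHsym : ∀ y u v, ⟪H y u, v⟫ = ⟪u, H y v⟫)
    (lam : EuclideanSpace ℝ (Fin n) → ℝ)
    (hlam : ∀ y, lam y =
      sInf {r : ℝ | ∃ u : EuclideanSpace ℝ (Fin n), ‖u‖ = 1 ∧ r = ⟪u, H y u⟫})
    (x : EuclideanSpace ℝ (Fin n))
    (δ γ : ℝ) (hδ : δ ∈ Set.Ioc (0 : ℝ) 1) (hγ : γ ∈ Set.Ioc (0 : ℝ) 1)
    (Lk σk : ℝ) (hLk : 0 < Lk) (hσk : 0 < σk)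
    (s d : EuclideanSpace ℝ (Fin n))
    (hnotboth : ¬(s = 0 ∧ d = 0))
    (hs : (gradient f x = 0 ∧ s = 0) ∨
      (s ≠ 0 ∧ -⟪gradient f x, s⟫ ≥ δ * ‖s‖ * ‖gradient f x‖))
    (hd : (0 ≤ lam x ∧ d = 0) ∨
      (d ≠ 0 ∧ ⟪d, H x d⟫ ≤ γ * lam x * ‖d‖ ^ 2 ∧ γ * lam x * ‖d‖ ^ 2 < 0 ∧
        ⟪gradient f x, d⟫ ≤ 0))
    (ms : ℝ → ℝ)
    (hms : ∀ α, ms α = -α * ⟪gradient f x, s⟫ - 1/2 * Lk * α ^ 2 * ‖s‖ ^ 2)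
    (md : ℝ → ℝ)
    (hmd : ∀ β, md β = -β * ⟪gradient f x, d⟫ - 1/2 * β ^ 2 * ⟪d, H x d⟫
      - σk / 6 * β ^ 3 * ‖d‖ ^ 3)
    (αk : ℝ)
    (hαk_ne : s ≠ 0 → αk = -⟪gradient f x, s⟫ / (Lk * ‖s‖ ^ 2))
    (hαk_eq : s = 0 → αk = 0)
    (βk : ℝ)
    (hβk_ne : d ≠ 0 → βk = (-⟪d, H x d⟫ +
      Real.sqrt (⟪d, H x d⟫ ^ 2 - 2 * σk * ‖d‖ ^ 3 * ⟪gradient f x, d⟫)) / (σk * ‖d‖ ^ 3))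
    (hβk_eq : d = 0 → βk = 0)
    (xplus : EuclideanSpace ℝ (Fin n))
    (hstep_s : ms αk ≥ md βk → f xplus ≤ f x - ms αk)
    (hstep_d : ms αk < md βk → f xplus ≤ f x - md βk) :
    f x - f xplus ≥
      max (δ ^ 2 / (2 * Lk) * ‖gradient f x‖ ^ 2)
        (2 * γ ^ 3 / (3 * σk ^ 2) * |min 0 (lam x)| ^ 3) :=
  dynamic_method_per_iteration_decrease_general n f H lam x δ γ hδ hγ Lk σk hLk hσk s d hs hd ms hms
    md hmd αk hαk_ne hαk_eq βk hβk_ne hβk_eq xplus hstep_s hstep_d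
end

section
/- (Convergence of the dynamic method.) Suppose f is bounded below by f_inf ∈ ℝ. Fix δ, γ ∈ (0,1] and L_max, σ_max > 0, and let (x_k)_{k≥1} be a sequence in E and (L_k), (σ_k) sequences with L_k ∈ (0, L_max] and σ_k ∈ (0, σ_max] for all k, such that for every k, f(x_k) − f(x_{k+1}) ≥ max{ (δ²/(2L_k)) ‖g(x_k)‖², (2γ³/(3σ_k²)) |(λ(x_k))₋|³ }. Then ‖g(x_k)‖ → 0 as k → ∞ and liminf_{k→∞} λ(x_k) ≥ 0. -/
/-!
The values `f (x k)` are nonincreasing and bounded below by `f_inf`, so they converge and the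
decrements `f (x k) - f (x (k + 1))` tend to zero. Since `L k ≤ Lmax` and `σ k ≤ σmax`, each
decrement dominates a fixed positive multiple of `‖g (x k)‖ ^ 2` and of `|(λ (x k))₋| ^ 3`, so
both quantities tend to zero; the second gives `liminf λ (x k) ≥ 0`.
-/

open scoped RealInnerProductSpace Topology
open Filter Set

theorem tendsto_zero_of_tendsto_pow {α : Type*} {l : Filter α} {a : α → ℝ} {p : ℕ}
    (hp : p ≠ 0) (ha : ∀ k, 0 ≤ a k) (h : Tendsto (fun k => a k ^ p) l (𝓝 0)) :
    Tendsto a l (𝓝 0) := by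
  have hroot := h.rpow_const (p := (p⁻¹ : ℝ)) (Or.inr (by positivity))
  rw [Real.zero_rpow (by positivity)] at hroot
  exact hroot.congr fun k => Real.pow_rpow_inv_natCast (ha k) hp

theorem Antitone.tendsto_sub_succ_zero {u : ℕ → ℝ} (hu : Antitone u)
    (hbdd : BddBelow (range u)) : Tendsto (fun k => u k - u (k + 1)) atTop (𝓝 0) := by
  have hlim := tendsto_atTop_ciInf hu hbdd
  simpa using hlim.sub (hlim.comp (tendsto_add_atTop_nat 1))

theorem tendsto_zero_of_mul_pow_le_sub_succ {u a : ℕ → ℝ} {c : ℝ} {p : ℕ}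
    (hbdd : BddBelow (range u)) (hc : 0 < c) (hp : p ≠ 0) (ha : ∀ k, 0 ≤ a k)
    (hdec : ∀ k, c * a k ^ p ≤ u k - u (k + 1)) : Tendsto a atTop (𝓝 0) := by
  have hanti : Antitone u := antitone_nat_of_succ_le fun k => by
    linarith [hdec k, mul_nonneg hc.le (pow_nonneg (ha k) p)]
  have hbound : Tendsto (fun k => c⁻¹ * (u k - u (k + 1))) atTop (𝓝 0) := by
    simpa using (hanti.tendsto_sub_succ_zero hbdd).const_mul c⁻¹
  refine tendsto_zero_of_tendsto_pow hp ha <|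
    squeeze_zero (fun k => pow_nonneg (ha k) p) (fun k => ?_) hbound
  rw [← div_eq_inv_mul, le_div_iff₀ hc, mul_comm]
  exact hdec k

theorem zero_le_liminf_of_tendsto_abs_min_zero {α : Type*} {l : Filter α} [l.NeBot]
    {b : α → ℝ} (h : Tendsto (fun k => |min 0 (b k)|) l (𝓝 0)) :
    (0 : EReal) ≤ liminf (fun k => (b k : EReal)) l := by
  have hmin : Tendsto (fun k => min 0 (b k)) l (𝓝 0) := by
    simpa [abs_of_nonpos (min_le_left (0 : ℝ) _)] using h.neg
  have hcoe : Tendsto (fun k => ((min 0 (b k) : ℝ) : EReal)) l (𝓝 0) :=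
    EReal.tendsto_coe.mpr hmin
  calc (0 : EReal) = liminf (fun k => ((min 0 (b k) : ℝ) : EReal)) l := hcoe.liminf_eq.symm
    _ ≤ liminf (fun k => (b k : EReal)) l :=
      liminf_le_liminf (Eventually.of_forall fun k => EReal.coe_le_coe_iff.mpr (min_le_right _ _))

theorem dynamic_method_convergence_general
    (n : ℕ)
    (f : EuclideanSpace ℝ (Fin n) → ℝ)
    (f_inf : ℝ) (hfbdd : ∀ y, f_inf ≤ f y)
    (lam : EuclideanSpace ℝ (Fin n) → ℝ)
    (δ γ : ℝ) (hδ : δ ∈ Set.Ioc (0 : ℝ) 1) (hγ : γ ∈ Set.Ioc (0 : ℝ) 1)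
    (Lmax σmax : ℝ) (hLmax : 0 < Lmax) (hσmax : 0 < σmax)
    (x : ℕ → EuclideanSpace ℝ (Fin n)) (L σ : ℕ → ℝ)
    (hL : ∀ k, L k ∈ Set.Ioc (0 : ℝ) Lmax)
    (hσ : ∀ k, σ k ∈ Set.Ioc (0 : ℝ) σmax)
    (hdec : ∀ k, f (x k) - f (x (k + 1)) ≥
      max (δ ^ 2 / (2 * L k) * ‖gradient f (x k)‖ ^ 2)
        (2 * γ ^ 3 / (3 * (σ k) ^ 2) * |min 0 (lam (x k))| ^ 3)) :
    Tendsto (fun k => ‖gradient f (x k)‖) atTop (nhds 0) ∧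
    (0 : EReal) ≤ liminf (fun k => (lam (x k) : EReal)) atTop := by
  have hbdd : BddBelow (range fun k => f (x k)) := ⟨f_inf, forall_mem_range.2 fun k => hfbdd _⟩
  have hδ0 := hδ.1
  have hγ0 := hγ.1
  have hgrad : ∀ k, δ ^ 2 / (2 * Lmax) * ‖gradient f (x k)‖ ^ 2 ≤ f (x k) - f (x (k + 1)) := by
    intro k
    have hLk := (hL k).1
    have hcoef : δ ^ 2 / (2 * Lmax) ≤ δ ^ 2 / (2 * L k) := by gcongr; exact (hL k).2
    exact (mul_le_mul_of_nonneg_right hcoef (by positivity)).trans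
      ((le_max_left _ _).trans (hdec k))
  have hcurv : ∀ k, 2 * γ ^ 3 / (3 * σmax ^ 2) * |min 0 (lam (x k))| ^ 3 ≤
      f (x k) - f (x (k + 1)) := by
    intro k
    have hσk := (hσ k).1
    have hcoef : 2 * γ ^ 3 / (3 * σmax ^ 2) ≤ 2 * γ ^ 3 / (3 * σ k ^ 2) := by
      gcongr; exact (hσ k).2
    exact (mul_le_mul_of_nonneg_right hcoef (by positivity)).trans
      ((le_max_right _ _).trans (hdec k))
  exact ⟨tendsto_zero_of_mul_pow_le_sub_succ hbdd (by positivity) two_ne_zero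
      (fun _ => norm_nonneg _) hgrad,
    zero_le_liminf_of_tendsto_abs_min_zero <| tendsto_zero_of_mul_pow_le_sub_succ hbdd
      (by positivity) three_ne_zero (fun _ => abs_nonneg _) hcurv⟩

/-- convergence of the dynamic method. -/
theorem dynamic_method_convergence
    (n : ℕ) (hn : 1 ≤ n)
    (f : EuclideanSpace ℝ (Fin n) → ℝ) (hf : ContDiff ℝ 2 f)
    (f_inf : ℝ) (hfbdd : ∀ y, f_inf ≤ f y)
    (H : EuclideanSpace ℝ (Fin n) → EuclideanSpace ℝ (Fin n) →L[ℝ] EuclideanSpace ℝ (Fin n))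
    (hH : ∀ y, HasFDerivAt (gradient f) (H y) y)
    (hHsym : ∀ y u v, ⟪H y u, v⟫ = ⟪u, H y v⟫)
    (lam : EuclideanSpace ℝ (Fin n) → ℝ)
    (hlam : ∀ y, lam y =
      sInf {r : ℝ | ∃ u : EuclideanSpace ℝ (Fin n), ‖u‖ = 1 ∧ r = ⟪u, H y u⟫})
    (δ γ : ℝ) (hδ : δ ∈ Set.Ioc (0 : ℝ) 1) (hγ : γ ∈ Set.Ioc (0 : ℝ) 1)
    (Lmax σmax : ℝ) (hLmax : 0 < Lmax) (hσmax : 0 < σmax)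
    (x : ℕ → EuclideanSpace ℝ (Fin n)) (L σ : ℕ → ℝ)
    (hL : ∀ k, L k ∈ Set.Ioc (0 : ℝ) Lmax)
    (hσ : ∀ k, σ k ∈ Set.Ioc (0 : ℝ) σmax)
    (hdec : ∀ k, f (x k) - f (x (k + 1)) ≥
      max (δ ^ 2 / (2 * L k) * ‖gradient f (x k)‖ ^ 2)
        (2 * γ ^ 3 / (3 * (σ k) ^ 2) * |min 0 (lam (x k))| ^ 3)) :
    Tendsto (fun k => ‖gradient f (x k)‖) atTop (nhds 0) ∧
    (0 : EReal) ≤ liminf (fun k => (lam (x k) : EReal)) atTop :=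
  dynamic_method_convergence_general n f f_inf hfbdd lam δ γ hδ hγ Lmax σmax hLmax hσmax x L σ hL hσ
    hdec
end

section
/- (Iteration complexity of the dynamic method.) Suppose f is bounded below by f_inf ∈ ℝ. Fix δ, γ ∈ (0,1] and L_max, σ_max > 0, and let (x_k)_{k≥1} be a sequence in E and (L_k), (σ_k) sequences with L_k ∈ (0, L_max] and σ_k ∈ (0, σ_max] for all k, such that for every k, f(x_k) − f(x_{k+1}) ≥ max{ (δ²/(2L_k)) ‖g(x_k)‖², (2γ³/(3σ_k²)) |(λ(x_k))₋|³ }. Then for every ε_g > 0 the set G(ε_g) := { k ≥ 1 : ‖g(x_k)‖ > ε_g } is finite with cardinality at most (2 L_max (f(x_1) − f_inf)/δ²) · ε_g^{−2}, and for every ε_H > 0 the set H(ε_H) := { k ≥ 1 : |(λ(x_k))₋| > ε_H } is finite with cardinality at most (3 σ_max² (f(x_1) − f_inf)/(2γ³)) · ε_H^{−3}. -/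
open scoped RealInnerProductSpace

/-! Every iteration decreases `f`, and an iteration with `‖g(x_k)‖ > ε_g` (resp.
`|(λ(x_k))₋| > ε_H`) decreases it by at least `δ² ε_g² / (2 L_max)` (resp.
`2 γ³ ε_H³ / (3 σ_max²)`). Telescoping, the number of such iterations times this amount is at
most the total decrease `f(x₁) - f_inf`. -/

theorem Finset.card_mul_le_sub_of_le_sub_succ {φ : ℕ → ℝ} {B c : ℝ} (hB : ∀ k, B ≤ φ k)
    (hanti : ∀ k, φ (k + 1) ≤ φ k) {t : Finset ℕ} (ht : ∀ k ∈ t, c ≤ φ k - φ (k + 1)) :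
    t.card * c ≤ φ 0 - B := by
  set N := t.sup id + 1
  have htN : t ⊆ Finset.range N := fun k hk =>
    Finset.mem_range.2 (Nat.lt_succ_of_le (Finset.le_sup (f := id) hk))
  calc t.card * c = ∑ _k ∈ t, c := by rw [Finset.sum_const, nsmul_eq_mul]
    _ ≤ ∑ k ∈ t, (φ k - φ (k + 1)) := Finset.sum_le_sum ht
    _ ≤ ∑ k ∈ Finset.range N, (φ k - φ (k + 1)) :=
        Finset.sum_le_sum_of_subset_of_nonneg htN fun k _ _ => sub_nonneg.2 (hanti k)
    _ = φ 0 - φ N := Finset.sum_range_sub' φ N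
    _ ≤ φ 0 - B := by linarith [hB N]

theorem Set.finite_and_ncard_le_of_le_sub_succ {φ : ℕ → ℝ} {B c : ℝ} (hB : ∀ k, B ≤ φ k)
    (hanti : ∀ k, φ (k + 1) ≤ φ k) (hc : 0 < c) {S : Set ℕ}
    (hS : ∀ k ∈ S, c ≤ φ k - φ (k + 1)) :
    S.Finite ∧ (S.ncard : ℝ) ≤ (φ 0 - B) / c := by
  have hcard : ∀ t : Finset ℕ, ↑t ⊆ S → (t.card : ℝ) ≤ (φ 0 - B) / c := fun t ht =>
    (le_div_iff₀ hc).2 (Finset.card_mul_le_sub_of_le_sub_succ hB hanti fun k hk => hS k (ht hk))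
  have hfin : S.Finite := by
    by_contra hinf
    obtain ⟨t, htS, htcard⟩ := Set.Infinite.exists_subset_card_eq hinf (⌈(φ 0 - B) / c⌉₊ + 1)
    have := hcard t htS
    rw [htcard, Nat.cast_add_one] at this
    linarith [Nat.le_ceil ((φ 0 - B) / c)]
  refine ⟨hfin, ?_⟩
  rw [Set.ncard_eq_toFinset_card S hfin]
  exact hcard _ (by simp)

theorem Set.finite_and_ncard_le_of_sufficient_decrease {φ m : ℕ → ℝ} {B a ε : ℝ} {p : ℕ}
    (hB : ∀ k, B ≤ φ k) (hdec : ∀ k, a * m k ^ p ≤ φ k - φ (k + 1)) (ha : 0 < a)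
    (hm : ∀ k, 0 ≤ m k) (hε : 0 < ε) :
    {k | ε < m k}.Finite ∧ ({k | ε < m k}.ncard : ℝ) ≤ (φ 0 - B) / a / ε ^ p := by
  have hanti : ∀ k, φ (k + 1) ≤ φ k := fun k =>
    sub_nonneg.1 ((by positivity [hm k] : 0 ≤ a * m k ^ p).trans (hdec k))
  rw [div_div]
  refine Set.finite_and_ncard_le_of_le_sub_succ hB hanti (by positivity) fun k hk => ?_
  calc a * ε ^ p ≤ a * m k ^ p := by gcongr; exact hk.le
    _ ≤ φ k - φ (k + 1) := hdec k

/-- `x 0` is the first iterate `x₁`. -/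
theorem dynamic_method_iteration_complexity_general
    (n : ℕ)
    (f : EuclideanSpace ℝ (Fin n) → ℝ)
    (f_inf : ℝ) (hfbdd : ∀ y, f_inf ≤ f y)
    (lam : EuclideanSpace ℝ (Fin n) → ℝ)
    (δ γ : ℝ) (hδ : δ ∈ Set.Ioc (0 : ℝ) 1) (hγ : γ ∈ Set.Ioc (0 : ℝ) 1)
    (Lmax σmax : ℝ)
    (x : ℕ → EuclideanSpace ℝ (Fin n)) (L σ : ℕ → ℝ)
    (hL : ∀ k, L k ∈ Set.Ioc (0 : ℝ) Lmax)
    (hσ : ∀ k, σ k ∈ Set.Ioc (0 : ℝ) σmax)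
    (hdec : ∀ k, f (x k) - f (x (k + 1)) ≥
      max (δ ^ 2 / (2 * L k) * ‖gradient f (x k)‖ ^ 2)
        (2 * γ ^ 3 / (3 * (σ k) ^ 2) * |min 0 (lam (x k))| ^ 3)) :
    (∀ εg : ℝ, 0 < εg →
      {k : ℕ | ‖gradient f (x k)‖ > εg}.Finite ∧
      ({k : ℕ | ‖gradient f (x k)‖ > εg}.ncard : ℝ) ≤
        2 * Lmax * (f (x 0) - f_inf) / δ ^ 2 / εg ^ 2) ∧
    (∀ εH : ℝ, 0 < εH →
      {k : ℕ | |min 0 (lam (x k))| > εH}.Finite ∧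
      ({k : ℕ | |min 0 (lam (x k))| > εH}.ncard : ℝ) ≤
        3 * σmax ^ 2 * (f (x 0) - f_inf) / (2 * γ ^ 3) / εH ^ 3) := by
  obtain ⟨hδ, -⟩ := hδ
  obtain ⟨hγ, -⟩ := hγ
  have hLmax : 0 < Lmax := (hL 0).1.trans_le (hL 0).2
  have hσmax : 0 < σmax := (hσ 0).1.trans_le (hσ 0).2
  refine ⟨fun εg hεg => ?_, fun εH hεH => ?_⟩
  · have hgrad : ∀ k, δ ^ 2 / (2 * Lmax) * ‖gradient f (x k)‖ ^ 2 ≤ f (x k) - f (x (k + 1)) :=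
      fun k => calc
        _ ≤ δ ^ 2 / (2 * L k) * ‖gradient f (x k)‖ ^ 2 := by
          gcongr; exacts [mul_pos two_pos (hL k).1, (hL k).2]
        _ ≤ _ := (le_max_left _ _).trans (hdec k)
    convert Set.finite_and_ncard_le_of_sufficient_decrease (fun k => hfbdd (x k)) hgrad
      (by positivity) (fun k => norm_nonneg _) hεg using 2
    field_simp
  · have hcurv : ∀ k, 2 * γ ^ 3 / (3 * σmax ^ 2) * |min 0 (lam (x k))| ^ 3 ≤
        f (x k) - f (x (k + 1)) := fun k => calc
        _ ≤ 2 * γ ^ 3 / (3 * σ k ^ 2) * |min 0 (lam (x k))| ^ 3 := by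
          gcongr; exacts [by positivity [(hσ k).1], (hσ k).1.le, (hσ k).2]
        _ ≤ _ := (le_max_right _ _).trans (hdec k)
    convert Set.finite_and_ncard_le_of_sufficient_decrease (fun k => hfbdd (x k)) hcurv
      (by positivity) (fun k => abs_nonneg _) hεH using 2
    field_simp

/-- iteration complexity of the dynamic method.
Here `x 0` plays the role of the first iterate `x₁`. -/
theorem dynamic_method_iteration_complexity
    (n : ℕ) (hn : 1 ≤ n)
    (f : EuclideanSpace ℝ (Fin n) → ℝ) (hf : ContDiff ℝ 2 f)
    (f_inf : ℝ) (hfbdd : ∀ y, f_inf ≤ f y)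
    (H : EuclideanSpace ℝ (Fin n) → EuclideanSpace ℝ (Fin n) →L[ℝ] EuclideanSpace ℝ (Fin n))
    (hH : ∀ y, HasFDerivAt (gradient f) (H y) y)
    (hHsym : ∀ y u v, ⟪H y u, v⟫ = ⟪u, H y v⟫)
    (lam : EuclideanSpace ℝ (Fin n) → ℝ)
    (hlam : ∀ y, lam y =
      sInf {r : ℝ | ∃ u : EuclideanSpace ℝ (Fin n), ‖u‖ = 1 ∧ r = ⟪u, H y u⟫})
    (δ γ : ℝ) (hδ : δ ∈ Set.Ioc (0 : ℝ) 1) (hγ : γ ∈ Set.Ioc (0 : ℝ) 1)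
    (Lmax σmax : ℝ) (hLmax : 0 < Lmax) (hσmax : 0 < σmax)
    (x : ℕ → EuclideanSpace ℝ (Fin n)) (L σ : ℕ → ℝ)
    (hL : ∀ k, L k ∈ Set.Ioc (0 : ℝ) Lmax)
    (hσ : ∀ k, σ k ∈ Set.Ioc (0 : ℝ) σmax)
    (hdec : ∀ k, f (x k) - f (x (k + 1)) ≥
      max (δ ^ 2 / (2 * L k) * ‖gradient f (x k)‖ ^ 2)
        (2 * γ ^ 3 / (3 * (σ k) ^ 2) * |min 0 (lam (x k))| ^ 3)) :
    (∀ εg : ℝ, 0 < εg →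
      {k : ℕ | ‖gradient f (x k)‖ > εg}.Finite ∧
      ({k : ℕ | ‖gradient f (x k)‖ > εg}.ncard : ℝ) ≤
        2 * Lmax * (f (x 0) - f_inf) / δ ^ 2 / εg ^ 2) ∧
    (∀ εH : ℝ, 0 < εH →
      {k : ℕ | |min 0 (lam (x k))| > εH}.Finite ∧
      ({k : ℕ | |min 0 (lam (x k))| > εH}.ncard : ℝ) ≤
        3 * σmax ^ 2 * (f (x 0) - f_inf) / (2 * γ ^ 3) / εH ^ 3) :=
  dynamic_method_iteration_complexity_general n f f_inf hfbdd lam δ γ hδ hγ Lmax σmax x L σ hL hσ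
    hdec
end

section
/- (One-step expected decrease with curvature noise.) Let f : E → ℝ be differentiable with gradient ∇f Lipschitz continuous with constant L > 0, and fix x ∈ E. Let (Ω, 𝔉, P) be a probability space and let s, d : Ω → E and ω : Ω → ℝ be measurable maps such that: ω has the uniform distribution on [−1, 1] and is independent of the pair (s, d); s and d are square-integrable; −⟪∇f(x), 𝔼[s]⟫ ≥ δ ‖∇f(x)‖² for some δ ∈ (0,1]; 𝔼[‖s‖²] ≤ M_{s1} + M_{s2} ‖∇f(x)‖²; and 𝔼[‖d‖²] ≤ M_{d1} + M_{d2} ‖∇f(x)‖², where M_{s1}, M_{d1} > 0 and M_{s2}, M_{d2} > 1. Then for any stepsizes α > 0 and β > 0, 𝔼[f(x + α s + β ω d)] − f(x) ≤ −(δα − (1/2) L M_{s2} α² − (1/6) L M_{d2} β²) ‖∇f(x)‖² + (1/2) L M_{s1} α² + (1/6) L M_{d1} β². -/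
/-!
Integrating `t ↦ ⟪∇f (x + t u), u⟫` over `[0, 1]` and using the Lipschitz bound on `∇f` gives the
descent lemma `f (x + u) ≤ f x + ⟪∇f x, u⟫ + L/2 ‖u‖²`. Take `u = α s + β ω d` and integrate.
Because `ω` is centred and independent of `(s, d)`, the curvature term `β ω d` drops out of `𝔼 u`
and of the cross term of `𝔼 ‖u‖²`, so `𝔼 u = α 𝔼 s` and `𝔼 ‖u‖² = α² 𝔼 ‖s‖² + β² 𝔼[ω²] 𝔼 ‖d‖²`,
where `𝔼[ω²] = 1/3` for the uniform law on `[-1, 1]`. The moment bounds then give the estimate.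
-/

open scoped RealInnerProductSpace ENNReal NNReal
open MeasureTheory ProbabilityTheory

section Descent

variable {E : Type*} [NormedAddCommGroup E] [InnerProductSpace ℝ E] [CompleteSpace E]
  {f : E → ℝ}

theorem sub_sub_inner_gradient_eq_intervalIntegral (hf : Differentiable ℝ f)
    (hgf : Continuous (gradient f)) (x u : E) :
    f (x + u) - f x - ⟪gradient f x, u⟫ =
      ∫ t in (0 : ℝ)..1, ⟪gradient f (x + t • u) - gradient f x, u⟫ := by
  have hderiv : ∀ t : ℝ,
      HasDerivAt (fun t : ℝ => f (x + t • u)) ⟪gradient f (x + t • u), u⟫ t := by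
    intro t
    have hline : HasDerivAt (fun t : ℝ => x + t • u) u t := by
      simpa using ((hasDerivAt_id t).smul_const u).const_add x
    simpa [InnerProductSpace.toDual_apply_apply, Function.comp_def] using
      (hf (x + t • u)).hasGradientAt.hasFDerivAt.comp_hasDerivAt t hline
  have hint : IntervalIntegrable (fun t : ℝ => ⟪gradient f (x + t • u), u⟫) volume 0 1 :=
    Continuous.intervalIntegrable (by fun_prop) 0 1
  simp_rw [inner_sub_left]
  rw [intervalIntegral.integral_sub hint intervalIntegrable_const,
    intervalIntegral.integral_eq_sub_of_hasDerivAt (fun t _ => hderiv t) hint]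
  simp

theorem abs_sub_sub_inner_gradient_le (hf : Differentiable ℝ f) {K : ℝ≥0}
    (hK : LipschitzWith K (gradient f)) (x u : E) :
    |f (x + u) - f x - ⟪gradient f x, u⟫| ≤ K / 2 * ‖u‖ ^ 2 := by
  have hpt : ∀ t ∈ Set.Icc (0 : ℝ) 1,
      |⟪gradient f (x + t • u) - gradient f x, u⟫| ≤ K * ‖u‖ ^ 2 * t := by
    intro t ht
    calc |⟪gradient f (x + t • u) - gradient f x, u⟫|
        ≤ ‖gradient f (x + t • u) - gradient f x‖ * ‖u‖ := abs_real_inner_le_norm _ _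
      _ ≤ K * ‖x + t • u - x‖ * ‖u‖ := by gcongr; exact hK.norm_sub_le _ _
      _ = K * ‖u‖ ^ 2 * t := by
        rw [add_sub_cancel_left, norm_smul, Real.norm_of_nonneg ht.1]; ring
  have hcont : Continuous fun t : ℝ => ⟪gradient f (x + t • u) - gradient f x, u⟫ := by
    have := hK.continuous; fun_prop
  rw [sub_sub_inner_gradient_eq_intervalIntegral hf hK.continuous]
  calc |∫ t in (0 : ℝ)..1, ⟪gradient f (x + t • u) - gradient f x, u⟫|
      ≤ ∫ t in (0 : ℝ)..1, |⟪gradient f (x + t • u) - gradient f x, u⟫| :=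
        intervalIntegral.abs_integral_le_integral_abs zero_le_one
    _ ≤ ∫ t in (0 : ℝ)..1, K * ‖u‖ ^ 2 * t :=
        intervalIntegral.integral_mono_on zero_le_one (hcont.abs.intervalIntegrable 0 1)
          ((by fun_prop : Continuous fun t : ℝ => (K : ℝ) * ‖u‖ ^ 2 * t).intervalIntegrable 0 1)
          hpt
    _ = K / 2 * ‖u‖ ^ 2 := by
        rw [intervalIntegral.integral_const_mul, integral_id]; ring

variable {K : ℝ≥0} {Ω : Type*} [MeasurableSpace Ω] {P : Measure Ω} {u : Ω → E}

theorem integrable_comp_const_add_of_lipschitzWith_gradient [IsFiniteMeasure P]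
    (hf : Differentiable ℝ f) (hK : LipschitzWith K (gradient f)) (x : E) (hu : MemLp u 2 P) :
    Integrable (fun a => f (x + u a)) P := by
  have hu_int : Integrable u P := hu.integrable one_le_two
  have hrem : Integrable (fun a => f (x + u a) - f x - ⟪gradient f x, u a⟫) P := by
    refine (hu.norm.integrable_sq.const_mul (K / 2 : ℝ)).mono' ?_
      (.of_forall fun a => abs_sub_sub_inner_gradient_le hf hK x (u a))
    exact ((hf.continuous.comp_aestronglyMeasurable (hu.1.const_add x)).sub
      aestronglyMeasurable_const).sub (hu_int.const_inner _).1
  refine ((hrem.add (integrable_const (f x))).add (hu_int.const_inner (gradient f x))).congr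
    (.of_forall fun a => ?_)
  simp only [Pi.add_apply]
  ring

theorem integral_comp_const_add_le [IsProbabilityMeasure P]
    (hf : Differentiable ℝ f) (hK : LipschitzWith K (gradient f)) (x : E) (hu : MemLp u 2 P) :
    ∫ a, f (x + u a) ∂P ≤
      f x + ⟪gradient f x, ∫ a, u a ∂P⟫ + K / 2 * ∫ a, ‖u a‖ ^ 2 ∂P := by
  have hu_int : Integrable u P := hu.integrable one_le_two
  have hinner : Integrable (fun a => ⟪gradient f x, u a⟫) P := hu_int.const_inner _
  have hsq : Integrable (fun a => (K / 2 : ℝ) * ‖u a‖ ^ 2) P :=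
    hu.norm.integrable_sq.const_mul _
  have hlin : Integrable (fun a => f x + ⟪gradient f x, u a⟫) P := (integrable_const _).add hinner
  calc ∫ a, f (x + u a) ∂P ≤ ∫ a, (f x + ⟪gradient f x, u a⟫ + K / 2 * ‖u a‖ ^ 2) ∂P :=
        integral_mono (integrable_comp_const_add_of_lipschitzWith_gradient hf hK x hu)
          (hlin.add hsq) fun a =>
          by linarith [le_of_abs_le (abs_sub_sub_inner_gradient_le hf hK x (u a))]
    _ = f x + ⟪gradient f x, ∫ a, u a ∂P⟫ + K / 2 * ∫ a, ‖u a‖ ^ 2 ∂P := by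
        rw [integral_add hlin hsq,
          integral_add (integrable_const _) hinner, integral_const, integral_const_mul,
          integral_inner hu_int, probReal_univ, one_smul]

end Descent

section UniformNoise

variable {Ω : Type*} [MeasurableSpace Ω] {P : Measure Ω} {ω : Ω → ℝ}

theorem integral_comp_of_map_eq_uniform_Icc (hω : AEMeasurable ω P)
    (hunif : P.map ω = (2 : ℝ≥0∞)⁻¹ • volume.restrict (Set.Icc (-1 : ℝ) 1))
    {g : ℝ → ℝ} (hg : Continuous g) :
    ∫ a, g (ω a) ∂P = 2⁻¹ * ∫ y in (-1 : ℝ)..1, g y := by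
  rw [← integral_map hω hg.aestronglyMeasurable, hunif, integral_smul_measure,
    integral_Icc_eq_integral_Ioc, ← intervalIntegral.integral_of_le (by norm_num),
    ENNReal.toReal_inv, smul_eq_mul]
  norm_num

theorem integral_eq_zero_of_map_eq_uniform_Icc (hω : AEMeasurable ω P)
    (hunif : P.map ω = (2 : ℝ≥0∞)⁻¹ • volume.restrict (Set.Icc (-1 : ℝ) 1)) :
    ∫ a, ω a ∂P = 0 := by
  rw [integral_comp_of_map_eq_uniform_Icc hω hunif (g := fun y => y) continuous_id, integral_id]
  norm_num

theorem integral_sq_of_map_eq_uniform_Icc (hω : AEMeasurable ω P)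
    (hunif : P.map ω = (2 : ℝ≥0∞)⁻¹ • volume.restrict (Set.Icc (-1 : ℝ) 1)) :
    ∫ a, ω a ^ 2 ∂P = 1 / 3 := by
  rw [integral_comp_of_map_eq_uniform_Icc hω hunif (continuous_pow 2), integral_pow]
  norm_num

theorem memLp_top_of_map_eq_uniform_Icc (hω : AEMeasurable ω P)
    (hunif : P.map ω = (2 : ℝ≥0∞)⁻¹ • volume.restrict (Set.Icc (-1 : ℝ) 1)) :
    MemLp ω ∞ P := by
  have hIcc : ∀ᵐ y ∂(P.map ω), y ∈ Set.Icc (-1 : ℝ) 1 := by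
    rw [hunif]
    exact Measure.ae_smul_measure (ae_restrict_mem measurableSet_Icc) _
  refine memLp_top_of_bound hω.aestronglyMeasurable 1 ?_
  filter_upwards [ae_of_ae_map hω hIcc] with a ha
  exact abs_le.mpr ha

end UniformNoise

section Perturbation

variable {E : Type*} [NormedAddCommGroup E] [InnerProductSpace ℝ E]
  [MeasurableSpace E] [BorelSpace E] {Ω : Type*} [MeasurableSpace Ω] {P : Measure Ω}
  {s d : Ω → E} {ω : Ω → ℝ}

theorem memLp_add_smul_smul (hind : IndepFun ω (fun a => (s a, d a)) P) (hω : MemLp ω 2 P)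
    (hs : MemLp s 2 P) (hd : MemLp d 2 P) (α β : ℝ) :
    MemLp (fun a => α • s a + (β * ω a) • d a) 2 P := by
  have hind_sq : IndepFun (fun a => ω a ^ 2) (fun a => ‖d a‖ ^ 2) P :=
    hind.comp (measurable_id.pow_const 2) (measurable_snd.norm.pow_const 2)
  have hωd : MemLp (fun a => ω a • d a) 2 P := by
    refine (memLp_two_iff_integrable_sq_norm (hω.1.smul hd.1)).2 ?_
    simpa [norm_smul, mul_pow, Pi.mul_def] using
      hind_sq.integrable_mul hω.integrable_sq hd.norm.integrable_sq
  simp_rw [mul_smul]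
  exact (hs.const_smul α).add (hωd.const_smul β)

theorem integral_add_smul_smul (hind : IndepFun ω (fun a => (s a, d a)) P)
    (hω : Integrable ω P) (hω0 : ∫ a, ω a ∂P = 0) (hs : Integrable s P) (hd : Integrable d P)
    (α β : ℝ) :
    ∫ a, (α • s a + (β * ω a) • d a) ∂P = α • ∫ a, s a ∂P := by
  have hind_d : IndepFun ω d P := hind.comp measurable_id measurable_snd
  have hnoise : ∫ a, ω a • d a ∂P = 0 := by
    rw [hind_d.integral_fun_smul_eq_smul_integral hω.1 hd.1, hω0, zero_smul]
  have hsignal : Integrable (fun a => α • s a) P := hs.smul α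
  have hperturb : Integrable (fun a => β • ω a • d a) P := (hind_d.integrable_smul hω hd).smul β
  simp_rw [mul_smul]
  rw [integral_add hsignal hperturb, integral_smul, integral_smul, hnoise, smul_zero, add_zero]

theorem integral_norm_add_smul_smul_sq [SecondCountableTopology E] [IsFiniteMeasure P]
    (hind : IndepFun ω (fun a => (s a, d a)) P)
    (hω : MemLp ω 2 P) (hω0 : ∫ a, ω a ∂P = 0) (hs : MemLp s 2 P) (hd : MemLp d 2 P)
    (α β : ℝ) :
    ∫ a, ‖α • s a + (β * ω a) • d a‖ ^ 2 ∂P =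
      α ^ 2 * ∫ a, ‖s a‖ ^ 2 ∂P + β ^ 2 * (∫ a, ω a ^ 2 ∂P) * ∫ a, ‖d a‖ ^ 2 ∂P := by
  have hind_sd : IndepFun ω (fun a => ⟪s a, d a⟫) P :=
    hind.comp measurable_id (measurable_fst.inner measurable_snd)
  have hind_sq : IndepFun (fun a => ω a ^ 2) (fun a => ‖d a‖ ^ 2) P :=
    hind.comp (measurable_id.pow_const 2) (measurable_snd.norm.pow_const 2)
  have hsd : Integrable (fun a => ⟪s a, d a⟫) P :=
    (hs.norm.integrable_mul hd.norm).mono' (hs.1.inner hd.1)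
      (.of_forall fun a => abs_real_inner_le_norm (s a) (d a))
  have hcross : Integrable (fun a => ω a * ⟪s a, d a⟫) P :=
    hind_sd.integrable_mul (hω.integrable one_le_two) hsd
  have hnoise : Integrable (fun a => ω a ^ 2 * ‖d a‖ ^ 2) P :=
    hind_sq.integrable_mul hω.integrable_sq hd.norm.integrable_sq
  have hsignal : Integrable (fun a => α ^ 2 * ‖s a‖ ^ 2) P := hs.norm.integrable_sq.const_mul _
  have hsignal_cross : Integrable
      (fun a => α ^ 2 * ‖s a‖ ^ 2 + 2 * (α * β) * (ω a * ⟪s a, d a⟫)) P :=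
    hsignal.add (hcross.const_mul _)
  have hexpand : ∀ a, ‖α • s a + (β * ω a) • d a‖ ^ 2 = α ^ 2 * ‖s a‖ ^ 2
      + 2 * (α * β) * (ω a * ⟪s a, d a⟫) + β ^ 2 * (ω a ^ 2 * ‖d a‖ ^ 2) := by
    intro a
    rw [norm_add_sq_real, norm_smul, norm_smul, real_inner_smul_left, real_inner_smul_right,
      Real.norm_eq_abs, Real.norm_eq_abs]
    ring_nf
    rw [sq_abs, sq_abs]
    ring
  simp_rw [hexpand]
  rw [integral_add hsignal_cross (hnoise.const_mul _), integral_add hsignal (hcross.const_mul _),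
    integral_const_mul, integral_const_mul, integral_const_mul,
    hind_sd.integral_fun_mul_eq_mul_integral hω.1 hsd.1,
    hind_sq.integral_fun_mul_eq_mul_integral (hω.1.pow 2) (hd.1.norm.pow 2), hω0]
  ring

end Perturbation

theorem one_step_expected_decrease_curvature_noise_general
    (n : ℕ)
    (f : EuclideanSpace ℝ (Fin n) → ℝ) (hf : Differentiable ℝ f)
    (L : ℝ) (hL : 0 < L)
    (hgLip : ∀ y z, ‖gradient f y - gradient f z‖ ≤ L * ‖y - z‖)
    (x : EuclideanSpace ℝ (Fin n))
    (Ω : Type) [MeasurableSpace Ω] (P : Measure Ω) [IsProbabilityMeasure P]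
    (s d : Ω → EuclideanSpace ℝ (Fin n)) (ω : Ω → ℝ)
    (hω_meas : Measurable ω)
    (hω_unif : P.map ω = (2 : ℝ≥0∞)⁻¹ • (volume.restrict (Set.Icc (-1 : ℝ) 1)))
    (hω_indep : IndepFun ω (fun a => (s a, d a)) P)
    (hs_L2 : MemLp s 2 P) (hd_L2 : MemLp d 2 P)
    (δ : ℝ)
    (Ms1 Md1 Ms2 Md2 : ℝ)
    (hs_mean : -⟪gradient f x, ∫ a, s a ∂P⟫ ≥ δ * ‖gradient f x‖ ^ 2)
    (hs_2nd : (∫ a, ‖s a‖ ^ 2 ∂P) ≤ Ms1 + Ms2 * ‖gradient f x‖ ^ 2)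
    (hd_2nd : (∫ a, ‖d a‖ ^ 2 ∂P) ≤ Md1 + Md2 * ‖gradient f x‖ ^ 2)
    (α β : ℝ) (hα : 0 < α) :
    (∫ a, f (x + α • s a + (β * ω a) • d a) ∂P) - f x ≤
      -(δ * α - 1/2 * L * Ms2 * α ^ 2 - 1/6 * L * Md2 * β ^ 2) * ‖gradient f x‖ ^ 2
        + 1/2 * L * Ms1 * α ^ 2 + 1/6 * L * Md1 * β ^ 2 := by
  have hK : LipschitzWith L.toNNReal (gradient f) :=
    LipschitzWith.of_dist_le_mul fun y z => by
      rw [Real.coe_toNNReal L hL.le, dist_eq_norm, dist_eq_norm]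
      exact hgLip y z
  have hω_L2 : MemLp ω 2 P :=
    (memLp_top_of_map_eq_uniform_Icc hω_meas.aemeasurable hω_unif).mono_exponent le_top
  have hω_mean := integral_eq_zero_of_map_eq_uniform_Icc hω_meas.aemeasurable hω_unif
  have hdescent := integral_comp_const_add_le hf hK x
    (memLp_add_smul_smul hω_indep hω_L2 hs_L2 hd_L2 α β)
  rw [integral_add_smul_smul hω_indep (hω_L2.integrable one_le_two) hω_mean
      (hs_L2.integrable one_le_two) (hd_L2.integrable one_le_two),
    integral_norm_add_smul_smul_sq hω_indep hω_L2 hω_mean hs_L2 hd_L2,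
    integral_sq_of_map_eq_uniform_Icc hω_meas.aemeasurable hω_unif, inner_smul_right,
    Real.coe_toNNReal L hL.le] at hdescent
  simp_rw [add_assoc x]
  have hmean : α * ⟪gradient f x, ∫ a, s a ∂P⟫ ≤ -(δ * α * ‖gradient f x‖ ^ 2) := by
    nlinarith
  have hs_bound := mul_le_mul_of_nonneg_left hs_2nd (by positivity : 0 ≤ L / 2 * α ^ 2)
  have hd_bound := mul_le_mul_of_nonneg_left hd_2nd (by positivity : 0 ≤ L / 6 * β ^ 2)
  linarith

/-- one-step expected decrease with curvature noise. -/
theorem one_step_expected_decrease_curvature_noise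
    (n : ℕ) (hn : 1 ≤ n)
    (f : EuclideanSpace ℝ (Fin n) → ℝ) (hf : Differentiable ℝ f)
    (L : ℝ) (hL : 0 < L)
    (hgLip : ∀ y z, ‖gradient f y - gradient f z‖ ≤ L * ‖y - z‖)
    (x : EuclideanSpace ℝ (Fin n))
    (Ω : Type) [MeasurableSpace Ω] (P : Measure Ω) [IsProbabilityMeasure P]
    (s d : Ω → EuclideanSpace ℝ (Fin n)) (ω : Ω → ℝ)
    (hs_meas : Measurable s) (hd_meas : Measurable d) (hω_meas : Measurable ω)
    (hω_unif : P.map ω = (2 : ℝ≥0∞)⁻¹ • (volume.restrict (Set.Icc (-1 : ℝ) 1)))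
    (hω_indep : IndepFun ω (fun a => (s a, d a)) P)
    (hs_L2 : MemLp s 2 P) (hd_L2 : MemLp d 2 P)
    (δ : ℝ) (hδ : δ ∈ Set.Ioc (0 : ℝ) 1)
    (Ms1 Md1 Ms2 Md2 : ℝ) (hMs1 : 0 < Ms1) (hMd1 : 0 < Md1)
    (hMs2 : 1 < Ms2) (hMd2 : 1 < Md2)
    (hs_mean : -⟪gradient f x, ∫ a, s a ∂P⟫ ≥ δ * ‖gradient f x‖ ^ 2)
    (hs_2nd : (∫ a, ‖s a‖ ^ 2 ∂P) ≤ Ms1 + Ms2 * ‖gradient f x‖ ^ 2)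
    (hd_2nd : (∫ a, ‖d a‖ ^ 2 ∂P) ≤ Md1 + Md2 * ‖gradient f x‖ ^ 2)
    (α β : ℝ) (hα : 0 < α) (hβ : 0 < β) :
    (∫ a, f (x + α • s a + (β * ω a) • d a) ∂P) - f x ≤
      -(δ * α - 1/2 * L * Ms2 * α ^ 2 - 1/6 * L * Md2 * β ^ 2) * ‖gradient f x‖ ^ 2
        + 1/2 * L * Ms1 * α ^ 2 + 1/6 * L * Md1 * β ^ 2 :=
  one_step_expected_decrease_curvature_noise_general n f hf L hL hgLip x Ω P s d ω hω_meas hω_unif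
    hω_indep hs_L2 hd_L2 δ Ms1 Md1 Ms2 Md2 hs_mean hs_2nd hd_2nd α β hα
end

section
/- (Fixed-stepsize bound for the stochastic two-step method, in total expectation.) Let δ ∈ (0,1], L > 0, M_{s1}, M_{d1} > 0, M_{s2}, M_{d2} > 1, f_inf ∈ ℝ, and let ᾱ satisfy 0 < ᾱ ≤ δ/(2 L max{M_{s2}, M_{d2}}). Let (a_k)_{k≥1} and (b_k)_{k≥1} be real sequences with a_k ≥ f_inf and b_k ≥ 0 for all k, satisfying for all k: a_{k+1} − a_k ≤ −(δᾱ − (1/2) L M_{s2} ᾱ² − (1/6) L M_{d2} ᾱ²) b_k + (1/2) L M_{s1} ᾱ² + (1/6) L M_{d1} ᾱ². Then for every K ≥ 1, (1/K) ∑_{k=1}^K b_k ≤ 2 ᾱ L max{M_{s1}, M_{d1}} / δ + 2 (a_1 − f_inf) / (K δ ᾱ). -/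
/-!
Summing the one-step descent inequality telescopes the left-hand side to `a K - a 0 ≥ f_inf - a 0`.
The stepsize restriction makes the second-order terms eat at most half of the first-order decrease
`δ ᾱ`, so each step removes at least `δ ᾱ / 2 · b k` at a noise cost of at most `L ᾱ² max{M_{s1}, M_{d1}}`;
dividing by `K δ ᾱ / 2` gives the bound.
-/

open Finset

section Descent

variable {𝕜 : Type*} [Field 𝕜] [LinearOrder 𝕜] [IsStrictOrderedRing 𝕜] {a b : ℕ → 𝕜} {c D : 𝕜}

theorem mul_sum_range_le_of_sub_le (h : ∀ k, a (k + 1) - a k ≤ -(c * b k) + D) (K : ℕ) :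
    c * ∑ k ∈ range K, b k ≤ a 0 - a K + K * D := by
  have hsum := sum_le_sum fun k (_ : k ∈ range K) => h k
  rw [sum_range_sub, sum_add_distrib, sum_neg_distrib, ← mul_sum, sum_const, card_range,
    nsmul_eq_mul] at hsum
  linarith

theorem average_le_of_sub_le (h : ∀ k, a (k + 1) - a k ≤ -(c * b k) + D) (hc : 0 < c)
    {a_inf : 𝕜} (ha : ∀ k, a_inf ≤ a k) {K : ℕ} (hK : 0 < K) :
    (1 / (K : 𝕜)) * ∑ k ∈ range K, b k ≤ D / c + (a 0 - a_inf) / (K * c) := by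
  have hK' : (0 : 𝕜) < K := Nat.cast_pos.mpr hK
  have hsum : c * ∑ k ∈ range K, b k ≤ a 0 - a_inf + K * D := by
    linarith [mul_sum_range_le_of_sub_le h K, ha K]
  rw [div_add_div _ _ hc.ne' (by positivity), le_div_iff₀ (by positivity)]
  calc (1 / (K : 𝕜) * ∑ k ∈ range K, b k) * (c * (K * c))
      = c * (c * ∑ k ∈ range K, b k) := by field_simp
    _ ≤ c * (a 0 - a_inf + K * D) := mul_le_mul_of_nonneg_left hsum hc.le
    _ = D * (K * c) + c * (a 0 - a_inf) := by ring

end Descent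

theorem half_mul_le_sub_of_le_div_max {δ L α M₁ M₂ : ℝ} (hδ : 0 < δ) (hL : 0 ≤ L) (hα : 0 < α)
    (hαM : α ≤ δ / (2 * L * max M₁ M₂)) :
    δ * α / 2 ≤ δ * α - 1/2 * L * M₁ * α ^ 2 - 1/6 * L * M₂ * α ^ 2 := by
  have hLM : 0 < 2 * L * max M₁ M₂ := (div_pos_iff_of_pos_left hδ).mp (hα.trans_le hαM)
  have hstep : α * (2 * L * max M₁ M₂) ≤ δ := (le_div_iff₀ hLM).mp hαM
  have hLα : 0 ≤ L * α ^ 2 := by positivity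
  have h₁ := mul_le_mul_of_nonneg_left (le_max_left M₁ M₂) hLα
  have h₂ := mul_le_mul_of_nonneg_left (le_max_right M₁ M₂) hLα
  nlinarith [mul_le_mul_of_nonneg_right hstep hα.le]

theorem half_add_sixth_mul_le_max {L M₁ M₂ : ℝ} (hL : 0 ≤ L) (hM₁ : 0 ≤ M₁) (α : ℝ) :
    1/2 * L * M₁ * α ^ 2 + 1/6 * L * M₂ * α ^ 2 ≤ L * max M₁ M₂ * α ^ 2 := by
  have hLα : 0 ≤ L * α ^ 2 := by positivity
  have h₁ := mul_le_mul_of_nonneg_left (le_max_left M₁ M₂) hLα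
  have h₂ := mul_le_mul_of_nonneg_left (le_max_right M₁ M₂) hLα
  have hM : 0 ≤ L * α ^ 2 * max M₁ M₂ := mul_nonneg hLα (hM₁.trans (le_max_left _ _))
  linarith

/-- The sequences are indexed from `0`: `a k = 𝔼[f(x_{k+1})]` and `b k = 𝔼[‖∇f(x_{k+1})‖²]`. -/
theorem stochastic_two_step_fixed_stepsize_general
    (δ : ℝ) (hδ : δ ∈ Set.Ioc (0 : ℝ) 1) (L : ℝ) (hL : 0 < L)
    (Ms1 Md1 : ℝ) (hMs1 : 0 < Ms1)
    (Ms2 Md2 : ℝ)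
    (f_inf : ℝ)
    (αbar : ℝ) (hαbar_pos : 0 < αbar)
    (hαbar : αbar ≤ δ / (2 * L * max Ms2 Md2))
    (a b : ℕ → ℝ)
    (ha : ∀ k, f_inf ≤ a k) (hb : ∀ k, 0 ≤ b k)
    (hdec : ∀ k, a (k + 1) - a k ≤
      -(δ * αbar - 1/2 * L * Ms2 * αbar ^ 2 - 1/6 * L * Md2 * αbar ^ 2) * b k
        + 1/2 * L * Ms1 * αbar ^ 2 + 1/6 * L * Md1 * αbar ^ 2) :
    ∀ K : ℕ, 1 ≤ K →
      (1 / (K : ℝ)) * ∑ k ∈ Finset.range K, b k ≤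
        2 * αbar * L * max Ms1 Md1 / δ + 2 * (a 0 - f_inf) / ((K : ℝ) * δ * αbar) := by
  intro K hK
  have hc : 0 < δ * αbar / 2 := by have := hδ.1; positivity
  have hstep : ∀ k, a (k + 1) - a k ≤ -(δ * αbar / 2 * b k) + L * max Ms1 Md1 * αbar ^ 2 := by
    intro k
    have hcoeff := mul_le_mul_of_nonneg_right
      (half_mul_le_sub_of_le_div_max hδ.1 hL.le hαbar_pos hαbar) (hb k)
    linarith [hdec k, half_add_sixth_mul_le_max hL.le hMs1.le (M₂ := Md1) αbar]
  calc _ ≤ _ := average_le_of_sub_le hstep hc ha hK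
    _ = _ := by field_simp

/-- fixed-stepsize bound for the stochastic two-step method, in total
expectation.  Here `a k` stands for `𝔼[f(x_{k+1})]` and `b k` for `𝔼[‖∇f(x_{k+1})‖²]`,
i.e. the sequences are indexed from `0` with `a 0 = 𝔼[f(x₁)]`. -/
theorem stochastic_two_step_fixed_stepsize
    (δ : ℝ) (hδ : δ ∈ Set.Ioc (0 : ℝ) 1) (L : ℝ) (hL : 0 < L)
    (Ms1 Md1 : ℝ) (hMs1 : 0 < Ms1) (hMd1 : 0 < Md1)
    (Ms2 Md2 : ℝ) (hMs2 : 1 < Ms2) (hMd2 : 1 < Md2)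
    (f_inf : ℝ)
    (αbar : ℝ) (hαbar_pos : 0 < αbar)
    (hαbar : αbar ≤ δ / (2 * L * max Ms2 Md2))
    (a b : ℕ → ℝ)
    (ha : ∀ k, f_inf ≤ a k) (hb : ∀ k, 0 ≤ b k)
    (hdec : ∀ k, a (k + 1) - a k ≤
      -(δ * αbar - 1/2 * L * Ms2 * αbar ^ 2 - 1/6 * L * Md2 * αbar ^ 2) * b k
        + 1/2 * L * Ms1 * αbar ^ 2 + 1/6 * L * Md1 * αbar ^ 2) :
    ∀ K : ℕ, 1 ≤ K →
      (1 / (K : ℝ)) * ∑ k ∈ Finset.range K, b k ≤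
        2 * αbar * L * max Ms1 Md1 / δ + 2 * (a 0 - f_inf) / ((K : ℝ) * δ * αbar) :=
  stochastic_two_step_fixed_stepsize_general δ hδ L hL Ms1 Md1 hMs1 Ms2 Md2 f_inf αbar hαbar_pos
    hαbar a b ha hb hdec
end

section
/- (Diminishing-stepsize result for the stochastic two-step method, in total expectation.) Let δ ∈ (0,1], L > 0, M_{s1}, M_{d1}, M_{s2}, M_{d2} > 0, χ > 0, f_inf ∈ ℝ, and let (α_k)_{k≥1} be positive reals with ∑_{k=1}^∞ α_k = ∞ and ∑_{k=1}^∞ α_k² < ∞. Let (a_k)_{k≥1} and (b_k)_{k≥1} be real sequences with a_k ≥ f_inf and b_k ≥ 0 for all k, satisfying for all k: a_{k+1} − a_k ≤ −(δα_k − (1/2) L M_{s2} α_k² − (1/6) L M_{d2} χ² α_k²) b_k + (1/2) L M_{s1} α_k² + (1/6) L M_{d1} χ² α_k². Then ∑_{k=1}^∞ α_k b_k < ∞; moreover, with A_K := ∑_{k=1}^K α_k one has (1/A_K) ∑_{k=1}^K α_k b_k → 0 as K → ∞, and liminf_{k→∞} b_k = 0. -/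
/-!
Once `α k` is small, the quadratic terms in the descent inequality cost at most half of the
linear term, so `(δ / 2) α k b k ≤ a k - a (k + 1) + C α k ^ 2` eventually, for a constant
`C`. Summing, the differences telescope against the lower bound `f_inf` and `∑ α k ^ 2 < ∞`,
which gives `∑ α k b k < ∞`. The weighted averages then tend to zero because their
denominators diverge, and `b` cannot stay above any `ε > 0` since otherwise
`∑ α k ≤ ε⁻¹ ∑ α k b k < ∞`.
-/

open Filter Topology Finset

theorem summable_of_le_sub_succ_add {a c e : ℕ → ℝ} {m : ℝ} (ha : ∀ k, m ≤ a k)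
    (hc : ∀ k, 0 ≤ c k) (he : Summable e) (hce : ∀ k, c k ≤ a k - a (k + 1) + e k) :
    Summable c := by
  obtain ⟨E, hE⟩ := he.hasSum.tendsto_sum_nat.bddAbove_range
  refine summable_of_sum_range_le hc (c := a 0 - m + E) fun n => ?_
  calc ∑ i ∈ range n, c i ≤ ∑ i ∈ range n, (a i - a (i + 1) + e i) :=
        sum_le_sum fun i _ => hce i
    _ = a 0 - a n + ∑ i ∈ range n, e i := by rw [sum_add_distrib, sum_range_sub']
    _ ≤ a 0 - m + E := by linarith [ha n, hE (Set.mem_range_self n)]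

theorem summable_of_eventually_le_sub_succ_add {a c e : ℕ → ℝ} {m : ℝ} (ha : ∀ k, m ≤ a k)
    (hc : ∀ k, 0 ≤ c k) (he : Summable e)
    (hce : ∀ᶠ k in atTop, c k ≤ a k - a (k + 1) + e k) : Summable c := by
  obtain ⟨N, hN⟩ := eventually_atTop.mp hce
  rw [← summable_nat_add_iff N]
  refine summable_of_le_sub_succ_add (fun k => ha (k + N)) (fun k => hc (k + N))
    ((summable_nat_add_iff N).mpr he) fun k => ?_
  simpa only [add_right_comm] using hN (k + N) (Nat.le_add_left N k)

theorem tendsto_zero_of_summable_sq {α : ℕ → ℝ} (h : Summable fun k => α k ^ 2) :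
    Tendsto α atTop (𝓝 0) := by
  have := h.tendsto_atTop_zero.sqrt
  simp only [Real.sqrt_sq_eq_abs, Real.sqrt_zero] at this
  exact tendsto_zero_iff_abs_tendsto_zero α |>.mpr this

theorem eventually_half_mul_le_sub_sq_mul {ι : Type*} {l : Filter ι} {α b : ι → ℝ} {δ C : ℝ}
    (hδ : 0 < δ) (hα : ∀ k, 0 ≤ α k) (hb : ∀ k, 0 ≤ b k) (hα0 : Tendsto α l (𝓝 0)) :
    ∀ᶠ k in l, δ / 2 * (α k * b k) ≤ (δ * α k - C * α k ^ 2) * b k := by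
  have hCα : Tendsto (fun k => C * α k) l (𝓝 0) := by simpa using hα0.const_mul C
  filter_upwards [hCα.eventually_lt_const (half_pos hδ)] with k hk
  have := mul_nonneg (mul_nonneg (hα k) (hb k)) (sub_nonneg.mpr hk.le)
  linarith

theorem frequently_lt_of_summable_mul_of_not_summable {α b : ℕ → ℝ} (hα : ∀ k, 0 ≤ α k)
    (hα_div : ¬Summable α) (hαb : Summable fun k => α k * b k) {ε : ℝ} (hε : 0 < ε) :
    ∃ᶠ k in atTop, b k < ε := by
  by_contra hfreq
  refine hα_div <| (hαb.mul_left ε⁻¹).of_norm_bounded_eventually_nat ?_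
  filter_upwards [not_frequently.mp hfreq] with k hk
  rw [Real.norm_of_nonneg (hα k), le_inv_mul_iff₀ hε, mul_comm ε]
  exact mul_le_mul_of_nonneg_left (not_lt.mp hk) (hα k)

theorem liminf_eq_zero_of_frequently_lt {ι : Type*} {l : Filter ι} {b : ι → ℝ}
    (hb : ∀ k, 0 ≤ b k) (h : ∀ ε > 0, ∃ᶠ k in l, b k < ε) : liminf b l = 0 := by
  have hbdd : IsBoundedUnder (· ≥ ·) l b := isBoundedUnder_of ⟨0, hb⟩
  refine le_antisymm (le_of_forall_pos_le_add fun ε hε => ?_) ?_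
  · simpa using liminf_le_of_frequently_le ((h ε hε).mono fun _ => le_of_lt) hbdd
  · exact le_liminf_of_le (IsCoboundedUnder.of_frequently_le ((h 1 one_pos).mono
      fun _ => le_of_lt)) (Eventually.of_forall hb)

theorem stochastic_two_step_diminishing_stepsize_general
    (δ : ℝ) (hδ : δ ∈ Set.Ioc (0 : ℝ) 1) (L : ℝ)
    (Ms1 Md1 Ms2 Md2 : ℝ)
    (χ : ℝ) (f_inf : ℝ)
    (α : ℕ → ℝ) (hα_pos : ∀ k, 0 < α k)
    (hα_div : ¬ Summable α) (hα_sq : Summable (fun k => (α k) ^ 2))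
    (a b : ℕ → ℝ)
    (ha : ∀ k, f_inf ≤ a k) (hb : ∀ k, 0 ≤ b k)
    (hdec : ∀ k, a (k + 1) - a k ≤
      -(δ * α k - 1/2 * L * Ms2 * (α k) ^ 2 - 1/6 * L * Md2 * χ ^ 2 * (α k) ^ 2) * b k
        + 1/2 * L * Ms1 * (α k) ^ 2 + 1/6 * L * Md1 * χ ^ 2 * (α k) ^ 2) :
    Summable (fun k => α k * b k) ∧
    Tendsto (fun K => (∑ k ∈ Finset.range K, α k)⁻¹ * ∑ k ∈ Finset.range K, α k * b k)
      atTop (nhds 0) ∧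
    liminf b atTop = 0 := by
  have hα : ∀ k, 0 ≤ α k := fun k => (hα_pos k).le
  have hdescent : ∀ᶠ k in atTop, δ / 2 * (α k * b k) ≤
      a k - a (k + 1) + (1/2 * L * Ms1 + 1/6 * L * Md1 * χ ^ 2) * α k ^ 2 := by
    filter_upwards [eventually_half_mul_le_sub_sq_mul (C := 1/2 * L * Ms2 + 1/6 * L * Md2 * χ ^ 2)
      hδ.1 hα hb (tendsto_zero_of_summable_sq hα_sq)] with k hk
    linarith [hdec k]
  have hsum : Summable fun k => α k * b k :=
    (summable_mul_left_iff (half_pos hδ.1).ne').mp <| summable_of_eventually_le_sub_succ_add ha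
      (fun k => mul_nonneg (half_pos hδ.1).le (mul_nonneg (hα k) (hb k)))
      (hα_sq.mul_left _) hdescent
  have hA := (not_summable_iff_tendsto_nat_atTop_of_nonneg hα).mp hα_div
  refine ⟨hsum, by simpa using hA.inv_tendsto_atTop.mul hsum.hasSum.tendsto_sum_nat, ?_⟩
  exact liminf_eq_zero_of_frequently_lt hb fun ε hε =>
    frequently_lt_of_summable_mul_of_not_summable hα hα_div hsum hε

/-- diminishing-stepsize result for the stochastic two-step method, in
total expectation.  Here `a k` stands for `𝔼[f(x_{k+1})]`, `b k` for
`𝔼[‖∇f(x_{k+1})‖²]`, and `α k` for the stepsize `α_{k+1}`, i.e. the sequences are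
indexed from `0`. -/
theorem stochastic_two_step_diminishing_stepsize
    (δ : ℝ) (hδ : δ ∈ Set.Ioc (0 : ℝ) 1) (L : ℝ) (hL : 0 < L)
    (Ms1 Md1 Ms2 Md2 : ℝ) (hMs1 : 0 < Ms1) (hMd1 : 0 < Md1)
    (hMs2 : 0 < Ms2) (hMd2 : 0 < Md2)
    (χ : ℝ) (hχ : 0 < χ) (f_inf : ℝ)
    (α : ℕ → ℝ) (hα_pos : ∀ k, 0 < α k)
    (hα_div : ¬ Summable α) (hα_sq : Summable (fun k => (α k) ^ 2))
    (a b : ℕ → ℝ)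
    (ha : ∀ k, f_inf ≤ a k) (hb : ∀ k, 0 ≤ b k)
    (hdec : ∀ k, a (k + 1) - a k ≤
      -(δ * α k - 1/2 * L * Ms2 * (α k) ^ 2 - 1/6 * L * Md2 * χ ^ 2 * (α k) ^ 2) * b k
        + 1/2 * L * Ms1 * (α k) ^ 2 + 1/6 * L * Md1 * χ ^ 2 * (α k) ^ 2) :
    Summable (fun k => α k * b k) ∧
    Tendsto (fun K => (∑ k ∈ Finset.range K, α k)⁻¹ * ∑ k ∈ Finset.range K, α k * b k)
      atTop (nhds 0) ∧
    liminf b atTop = 0 :=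
  stochastic_two_step_diminishing_stepsize_general δ hδ L Ms1 Md1 Ms2 Md2 χ f_inf α hα_pos hα_div
    hα_sq a b ha hb hdec
end
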